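/- arXiv:2209.10373 — 6 statements merged into one kernel-verified Lean document; each statement's English description precedes it below -/
import Mathlib

section
/- Let f(z) = Σ_{k=0}^m a_k z^k be a polynomial in one complex variable with no zeros in the open unit disk {z : |z| < 1}. For each n let c_n = min{‖pf − 1‖² : p ∈ ℂ[z], deg p ≤ n}, where ‖q‖² denotes the sum of the squared moduli of the coefficients of q. Then there is a constant C (depending on f) such that c_n ≤ C/n for all n ≥ 1. -/
/-!
Over `ℂ`, `f = f(0) · ∏ᵢ (1 - βᵢ z)` with `|βᵢ| ≤ 1`, the `βᵢ` being the inverse roots.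
For a single factor, the Cesàro mean `q` of the first `M` partial sums of `∑ (β z)ᵏ` satisfies
`q · (1 - β z) = 1 - g` with `g = M⁻¹ ∑_{k<M} (β z)ᵏ`, whose coefficient ℓ¹ norm is at most `1` and
whose ℓ² norm is at most `M^{-1/2}`. For `p = f(0)⁻¹ ∏ᵢ qᵢ` we get `p f - 1 = ∏ᵢ (1 - gᵢ) - 1`, and
Young's inequality `‖g h‖₂ ≤ ‖g‖₁ ‖h‖₂` bounds its ℓ² norm by `(2^m - 1) M^{-1/2}`. With
`M = ⌊n / (m + 1)⌋ + 1`, `deg p ≤ n` and `c_n ≤ (m + 1)(2^m - 1)² / n`.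
-/

noncomputable section

/-- Squared ℓ² norm of the coefficients of a one-variable polynomial. -/
def polyNormSq (q : Polynomial ℂ) : ℝ := ∑ k ∈ q.support, ‖q.coeff k‖ ^ 2

open Polynomial Finset

def polyNorm (q : ℂ[X]) : ℝ := √(polyNormSq q)

def polyNormL1 (q : ℂ[X]) : ℝ := ∑ k ∈ q.support, ‖q.coeff k‖

lemma polyNormSq_nonneg (q : ℂ[X]) : 0 ≤ polyNormSq q :=
  sum_nonneg fun _ _ => by positivity

lemma polyNorm_nonneg (q : ℂ[X]) : 0 ≤ polyNorm q := Real.sqrt_nonneg _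

lemma sq_polyNorm (q : ℂ[X]) : polyNorm q ^ 2 = polyNormSq q :=
  Real.sq_sqrt (polyNormSq_nonneg q)

lemma polyNormSq_eq_sum_of_support_subset {q : ℂ[X]} {s : Finset ℕ} (hs : q.support ⊆ s) :
    polyNormSq q = ∑ k ∈ s, ‖q.coeff k‖ ^ 2 :=
  sum_subset hs fun k _ hk => by simp [notMem_support_iff.mp hk]

lemma polyNormL1_eq_sum_of_support_subset {q : ℂ[X]} {s : Finset ℕ} (hs : q.support ⊆ s) :
    polyNormL1 q = ∑ k ∈ s, ‖q.coeff k‖ :=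
  sum_subset hs fun k _ hk => by simp [notMem_support_iff.mp hk]

lemma polyNorm_zero : polyNorm 0 = 0 := by simp [polyNorm, polyNormSq]

lemma polyNorm_neg (q : ℂ[X]) : polyNorm (-q) = polyNorm q := by simp [polyNorm, polyNormSq]

lemma polyNorm_add_le (a b : ℂ[X]) : polyNorm (a + b) ≤ polyNorm a + polyNorm b := by
  let s := a.support ∪ b.support
  let v : ℂ[X] → EuclideanSpace ℂ s := fun q => WithLp.toLp 2 fun i => q.coeff i
  have norm_v : ∀ q : ℂ[X], q.support ⊆ s → polyNorm q = ‖v q‖ := fun q hq => by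
    rw [EuclideanSpace.norm_eq, polyNorm, polyNormSq_eq_sum_of_support_subset hq,
      ← sum_coe_sort s]
  have v_add : v (a + b) = v a + v b := by ext; simp [v]
  rw [norm_v _ (support_add.trans subset_rfl), norm_v _ subset_union_left,
    norm_v _ subset_union_right, v_add]
  exact norm_add_le _ _

lemma polyNorm_sub_le (a b : ℂ[X]) : polyNorm (a - b) ≤ polyNorm a + polyNorm b := by
  simpa [sub_eq_add_neg, polyNorm_neg] using polyNorm_add_le a (-b)

lemma polyNorm_sum_le {ι : Type*} (s : Finset ι) (g : ι → ℂ[X]) :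
    polyNorm (∑ i ∈ s, g i) ≤ ∑ i ∈ s, polyNorm (g i) :=
  le_sum_of_subadditive polyNorm polyNorm_zero.le polyNorm_add_le s g

lemma polyNormSq_C_mul (a : ℂ) (q : ℂ[X]) : polyNormSq (C a * q) = ‖a‖ ^ 2 * polyNormSq q := by
  rw [← smul_eq_C_mul, polyNormSq_eq_sum_of_support_subset (support_smul a q), polyNormSq,
    mul_sum]
  simp [mul_pow]

lemma polyNormSq_mul_X_pow (q : ℂ[X]) (n : ℕ) : polyNormSq (q * X ^ n) = polyNormSq q := by
  have hsupp : (q * X ^ n).support ⊆ q.support.map (addRightEmbedding n) := by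
    intro d hd
    rw [mem_support_iff, coeff_mul_X_pow'] at hd
    split_ifs at hd with hnd
    · exact mem_map.mpr ⟨d - n, mem_support_iff.mpr hd, Nat.sub_add_cancel hnd⟩
    · exact absurd rfl hd
  rw [polyNormSq_eq_sum_of_support_subset hsupp, sum_map, polyNormSq]
  simp [coeff_mul_X_pow]

lemma polyNorm_C_mul_X_pow_mul (a : ℂ) (n : ℕ) (q : ℂ[X]) :
    polyNorm (C a * X ^ n * q) = ‖a‖ * polyNorm q := by
  rw [polyNorm, mul_assoc, mul_comm (X ^ n), polyNormSq_C_mul, polyNormSq_mul_X_pow,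
    Real.sqrt_mul (by positivity), Real.sqrt_sq (norm_nonneg a), polyNorm]

lemma polyNorm_mul_le (g h : ℂ[X]) : polyNorm (g * h) ≤ polyNormL1 g * polyNorm h := by
  conv_lhs => rw [as_sum_support_C_mul_X_pow g, sum_mul]
  refine (polyNorm_sum_le _ _).trans_eq ?_
  simp only [polyNorm_C_mul_X_pow_mul, ← sum_mul, polyNormL1]

lemma polyNorm_prod_one_sub_sub_one_le (s : Multiset ℂ[X]) (ε : ℝ)
    (hL1 : ∀ g ∈ s, polyNormL1 g ≤ 1) (hL2 : ∀ g ∈ s, polyNorm g ≤ ε) :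
    polyNorm ((s.map (1 - ·)).prod - 1) ≤ (2 ^ Multiset.card s - 1) * ε := by
  induction s using Multiset.induction_on with
  | empty => simp [polyNorm_zero]
  | cons g t ih =>
    obtain ⟨hg1, ht1⟩ := Multiset.forall_mem_cons.mp hL1
    obtain ⟨hg2, ht2⟩ := Multiset.forall_mem_cons.mp hL2
    set P := (t.map (1 - ·)).prod
    have hD := ih ht1 ht2
    have hgD : polyNorm (g * (P - 1)) ≤ polyNorm (P - 1) :=
      (polyNorm_mul_le g _).trans (mul_le_of_le_one_left (polyNorm_nonneg _) hg1)
    have hsplit : (1 - g) * P - 1 = (P - 1) - g - g * (P - 1) := by ring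
    rw [Multiset.map_cons, Multiset.prod_cons]
    calc polyNorm ((1 - g) * P - 1)
        ≤ polyNorm (P - 1) + polyNorm g + polyNorm (g * (P - 1)) := by
          rw [hsplit]
          linarith [polyNorm_sub_le (P - 1 - g) (g * (P - 1)), polyNorm_sub_le (P - 1) g]
      _ ≤ (2 ^ Multiset.card (g ::ₘ t) - 1) * ε := by
          rw [Multiset.card_cons, pow_succ]
          linarith

lemma polyNormL1_le_of_norm_coeff_le {q : ℂ[X]} {M : ℕ} {ε : ℝ} (hq : q.support ⊆ range M)
    (hε : ∀ k, ‖q.coeff k‖ ≤ ε) : polyNormL1 q ≤ M * ε := by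
  rw [polyNormL1_eq_sum_of_support_subset hq]
  exact (sum_le_card_nsmul _ _ _ fun k _ => hε k).trans_eq (by simp)

lemma polyNormSq_le_of_norm_coeff_le {q : ℂ[X]} {M : ℕ} {ε : ℝ} (hq : q.support ⊆ range M)
    (hε : ∀ k, ‖q.coeff k‖ ≤ ε) : polyNormSq q ≤ M * ε ^ 2 := by
  rw [polyNormSq_eq_sum_of_support_subset hq]
  exact (sum_le_card_nsmul _ _ _ fun k _ => pow_le_pow_left₀ (norm_nonneg _) (hε k) 2).trans_eq
    (by simp)

def cesaroInv (β : ℂ) (M : ℕ) : ℂ[X] :=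
  C (M : ℂ)⁻¹ * ∑ j ∈ range M, ∑ k ∈ range j, (C β * X) ^ k

def cesaroDefect (β : ℂ) (M : ℕ) : ℂ[X] :=
  C (M : ℂ)⁻¹ * ∑ k ∈ range M, (C β * X) ^ k

lemma cesaroInv_mul_one_sub (β : ℂ) {M : ℕ} (hM : M ≠ 0) :
    cesaroInv β M * (1 - C β * X) = 1 - cesaroDefect β M := by
  have hM' : (M : ℂ) ≠ 0 := Nat.cast_ne_zero.mpr hM
  rw [cesaroInv, cesaroDefect, mul_assoc, sum_mul, sum_congr rfl fun j _ => geom_sum_mul_neg _ j,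
    sum_sub_distrib, sum_const, card_range, nsmul_eq_mul, mul_one, mul_sub, ← C_eq_natCast,
    ← C_mul, inv_mul_cancel₀ hM', C_1]

lemma natDegree_cesaroInv_le (β : ℂ) (N : ℕ) : (cesaroInv β (N + 1)).natDegree ≤ N := by
  refine (natDegree_C_mul_le _ _).trans <| natDegree_sum_le_of_forall_le _ _ fun j hj =>
    natDegree_sum_le_of_forall_le _ _ fun k hk => ?_
  rw [mul_pow, ← C_pow]
  have := mem_range.mp hj
  have := mem_range.mp hk
  exact (natDegree_C_mul_X_pow_le _ k).trans (by omega)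

lemma coeff_cesaroDefect (β : ℂ) (M k : ℕ) :
    (cesaroDefect β M).coeff k = if k < M then (M : ℂ)⁻¹ * β ^ k else 0 := by
  simp only [cesaroDefect, mul_sum, mul_pow, ← C_pow, ← mul_assoc, ← C_mul, finsetSum_coeff,
    coeff_C_mul_X_pow]
  rw [sum_ite_eq]
  simp [mem_range]

lemma support_cesaroDefect_subset (β : ℂ) (M : ℕ) : (cesaroDefect β M).support ⊆ range M := by
  intro k hk
  rw [mem_support_iff, coeff_cesaroDefect] at hk
  split_ifs at hk with h
  · exact mem_range.mpr h
  · exact absurd rfl hk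

lemma norm_coeff_cesaroDefect_le {β : ℂ} (hβ : ‖β‖ ≤ 1) (M k : ℕ) :
    ‖(cesaroDefect β M).coeff k‖ ≤ (M : ℝ)⁻¹ := by
  rw [coeff_cesaroDefect]
  split_ifs
  · simpa [norm_mul, norm_pow] using
      mul_le_of_le_one_right (by positivity) (pow_le_one₀ (norm_nonneg β) hβ)
  · simp

lemma polyNormL1_cesaroDefect_le {β : ℂ} (hβ : ‖β‖ ≤ 1) (M : ℕ) :
    polyNormL1 (cesaroDefect β M) ≤ 1 :=
  (polyNormL1_le_of_norm_coeff_le (support_cesaroDefect_subset β M)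
    (norm_coeff_cesaroDefect_le hβ M)).trans (mul_inv_le_one)

lemma polyNorm_cesaroDefect_le {β : ℂ} (hβ : ‖β‖ ≤ 1) (M : ℕ) :
    polyNorm (cesaroDefect β M) ≤ (√M)⁻¹ := by
  rw [polyNorm, ← Real.sqrt_inv]
  refine Real.sqrt_le_sqrt <| (polyNormSq_le_of_norm_coeff_le (support_cesaroDefect_subset β M)
    (norm_coeff_cesaroDefect_le hβ M)).trans_eq ?_
  rcases eq_or_ne M 0 with rfl | hM
  · simp
  · field_simp

lemma eq_C_eval_zero_mul_prod_one_sub_inv_mul_X {K : Type*} [Field K] [IsAlgClosed K] {f : K[X]}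
    (hf : f.eval 0 ≠ 0) : f = C (f.eval 0) * (f.roots.map fun α => 1 - C α⁻¹ * X).prod := by
  set P := (f.roots.map fun α => 1 - C α⁻¹ * X).prod
  have hP : P.eval 0 = 1 := by simp [P, eval_multiset_prod]
  have hroot_ne : ∀ α ∈ f.roots, α ≠ 0 := fun α hα h0 => hf (h0 ▸ (mem_roots'.mp hα).2 : f.IsRoot 0)
  have hlinear : f.roots.map (fun α => X - C α) = f.roots.map fun α => C (-α) * (1 - C α⁻¹ * X) :=
    Multiset.map_congr rfl fun α hα => by
      rw [mul_sub, mul_one, ← mul_assoc, ← C_mul, neg_mul, mul_inv_cancel₀ (hroot_ne α hα), C_neg,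
        C_neg, C_1]
      ring
  have hfactor : f = C (f.leadingCoeff * (f.roots.map Neg.neg).prod) * P := by
    conv_lhs => rw [← C_leadingCoeff_mul_prod_multiset_X_sub_C
      (splits_iff_card_roots.mp (IsAlgClosed.splits f))]
    rw [hlinear, Multiset.prod_map_mul, C_mul, map_multiset_prod, Multiset.map_map, mul_assoc]
    rfl
  have hconst : f.eval 0 = f.leadingCoeff * (f.roots.map Neg.neg).prod := by
    conv_lhs => rw [hfactor, eval_mul, eval_C, hP, mul_one]
  rwa [hconst]

theorem exists_natDegree_le_polyNormSq_mul_sub_one_le {f : ℂ[X]}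
    (hf : ∀ z : ℂ, ‖z‖ < 1 → f.eval z ≠ 0) (N : ℕ) :
    ∃ p : ℂ[X], p.natDegree ≤ f.natDegree * N ∧
      polyNormSq (p * f - 1) ≤ (2 ^ f.natDegree - 1) ^ 2 / (N + 1) := by
  have hf0 : f.eval 0 ≠ 0 := hf 0 (by simp)
  have hcard : Multiset.card f.roots = f.natDegree :=
    splits_iff_card_roots.mp (IsAlgClosed.splits f)
  have hinv : ∀ α ∈ f.roots, ‖α⁻¹‖ ≤ 1 := fun α hα => by
    rw [norm_inv]
    exact inv_le_one_of_one_le₀ (not_lt.mp fun h => hf α h (mem_roots'.mp hα).2)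
  let p := C (f.eval 0)⁻¹ * (f.roots.map fun α => cesaroInv α⁻¹ (N + 1)).prod
  have hpf : p * f = ((f.roots.map fun α => cesaroDefect α⁻¹ (N + 1)).map (1 - ·)).prod := by
    conv_lhs => rw [eq_C_eval_zero_mul_prod_one_sub_inv_mul_X hf0]
    rw [mul_mul_mul_comm, ← C_mul, inv_mul_cancel₀ hf0, C_1, one_mul, ← Multiset.prod_map_mul,
      Multiset.map_map]
    exact congrArg Multiset.prod <| Multiset.map_congr rfl fun α _ =>
      cesaroInv_mul_one_sub α⁻¹ N.succ_ne_zero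
  refine ⟨p, ?_, ?_⟩
  · refine (natDegree_C_mul_le _ _).trans <| (natDegree_multiset_prod_le _).trans ?_
    refine (Multiset.sum_le_card_nsmul _ N ?_).trans_eq (by simp [hcard])
    simp only [Multiset.map_map, Multiset.forall_mem_map_iff]
    exact fun α _ => natDegree_cesaroInv_le α⁻¹ N
  · have hnorm := polyNorm_prod_one_sub_sub_one_le
      (f.roots.map fun α => cesaroDefect α⁻¹ (N + 1)) (√(N + 1 : ℕ))⁻¹
      (Multiset.forall_mem_map_iff.mpr fun α hα => polyNormL1_cesaroDefect_le (hinv α hα) _)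
      (Multiset.forall_mem_map_iff.mpr fun α hα => polyNorm_cesaroDefect_le (hinv α hα) _)
    rw [← hpf, Multiset.card_map, hcard] at hnorm
    rw [← sq_polyNorm]
    refine (pow_le_pow_left₀ (polyNorm_nonneg _) hnorm 2).trans_eq ?_
    rw [mul_pow, inv_pow, Real.sq_sqrt (Nat.cast_nonneg _), div_eq_mul_inv]
    push_cast
    rfl

/-- If `f` has no zeros in the open unit disk, then the optimal approximation errors
`c_n = min {‖pf − 1‖² : deg p ≤ n}` satisfy `c_n ≤ C/n` for all `n ≥ 1`. -/
theorem opa_one_variable (f : Polynomial ℂ)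
    (hf : ∀ z : ℂ, ‖z‖ < 1 → Polynomial.eval z f ≠ 0) :
    ∃ C : ℝ, ∀ n : ℕ, 1 ≤ n →
      sInf {t : ℝ | ∃ p : Polynomial ℂ, p.natDegree ≤ n ∧ t = polyNormSq (p * f - 1)}
        ≤ C / n := by
  set m := f.natDegree
  refine ⟨(m + 1) * (2 ^ m - 1) ^ 2, fun n hn => ?_⟩
  obtain ⟨p, hdeg, herr⟩ := exists_natDegree_le_polyNormSq_mul_sub_one_le hf (n / (m + 1))
  have hn_lt : (n : ℝ) < (m + 1) * (n / (m + 1) + 1 : ℕ) := by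
    exact_mod_cast Nat.lt_mul_div_succ n m.succ_pos
  calc sInf {t : ℝ | ∃ p : Polynomial ℂ, p.natDegree ≤ n ∧ t = polyNormSq (p * f - 1)}
      ≤ polyNormSq (p * f - 1) :=
        csInf_le ⟨0, fun t ⟨_, _, ht⟩ => ht ▸ polyNormSq_nonneg _⟩
          ⟨p, hdeg.trans ((Nat.mul_le_mul_right _ m.le_succ).trans (Nat.mul_div_le n _)), rfl⟩
    _ ≤ (2 ^ m - 1) ^ 2 / (n / (m + 1) + 1 : ℕ) := by exact_mod_cast herr
    _ ≤ (m + 1) * (2 ^ m - 1) ^ 2 / n := by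
        rw [div_le_div_iff₀ (by positivity) (by exact_mod_cast hn)]
        nlinarith [sq_nonneg ((2 : ℝ) ^ m - 1)]
end
end

section
/- Let f be a free polynomial in d noncommuting indeterminates and suppose (p_n) is a sequence of free polynomials such that ‖p_n f − 1‖₂ → 0 as n → ∞. Then f is nonsingular in the row ball: for every k ≥ 1 and every d-tuple X of k×k complex matrices with ‖X₁X₁* + ⋯ + X_dX_d*‖ < 1, the matrix f(X) is invertible. -/
open scoped BigOperators Kronecker
open Matrix

noncomputable section

/-- Words in the letters `1,…,d`. -/
abbrev Word (d : ℕ) := FreeMonoid (Fin d)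

/-- The free algebra `ℂ⟨x₁,…,x_d⟩`, realized as the monoid algebra of the free monoid. -/
abbrev FreePoly (d : ℕ) := MonoidAlgebra ℂ (Word d)

/-- Squared ℓ² norm of the coefficients of a free polynomial. -/
def FreePoly.normSq {d : ℕ} (p : FreePoly d) : ℝ := p.coeff.sum fun _ c => ‖c‖ ^ 2

/-- ℓ² norm of the coefficients of a free polynomial. -/
def FreePoly.norm2 {d : ℕ} (p : FreePoly d) : ℝ := Real.sqrt p.normSq

/-- `p` has degree at most `n`. -/
def FreePoly.degLE {d : ℕ} (p : FreePoly d) (n : ℕ) : Prop :=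
  ∀ w ∈ p.coeff.support, w.toList.length ≤ n

/-- Evaluation of a word at a `d`-tuple of `k × k` matrices: `X^w`. -/
def wordEval {d k : ℕ} (X : Fin d → Matrix (Fin k) (Fin k) ℂ) (w : Word d) :
    Matrix (Fin k) (Fin k) ℂ :=
  (w.toList.map X).prod

/-- Evaluation of a free polynomial at a matrix tuple. -/
def FreePoly.eval {d k : ℕ} (p : FreePoly d) (X : Fin d → Matrix (Fin k) (Fin k) ℂ) :
    Matrix (Fin k) (Fin k) ℂ :=
  p.coeff.sum fun w c => c • wordEval X w

/-- `k×k`-matrix-valued free polynomials `M_k(ℂ⟨x⟩)`. -/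
abbrev MatPoly (d k : ℕ) := Matrix (Fin k) (Fin k) (FreePoly d)

/-- Squared ℓ² (Frobenius) norm of the coefficients of a matrix free polynomial. -/
def MatPoly.normSq {d k : ℕ} (F : MatPoly d k) : ℝ := ∑ i, ∑ j, (F i j).normSq

def MatPoly.norm2 {d k : ℕ} (F : MatPoly d k) : ℝ := Real.sqrt F.normSq

def MatPoly.degLE {d k : ℕ} (F : MatPoly d k) (n : ℕ) : Prop := ∀ i j, (F i j).degLE n

/-- Evaluation of a matrix free polynomial at an `m×m` matrix tuple,
`F(X) = Σ_w A_w ⊗ X^w ∈ M_k(ℂ) ⊗ M_m(ℂ)`. -/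
def MatPoly.eval {d k m : ℕ} (F : MatPoly d k) (X : Fin d → Matrix (Fin m) (Fin m) ℂ) :
    Matrix (Fin k × Fin m) (Fin k × Fin m) ℂ :=
  Matrix.of fun p q => ((F p.1 q.1).eval X) p.2 q.2

/-- The homogeneous linear pencil `Ax = A₁x₁ + ⋯ + A_d x_d` as a matrix free polynomial. -/
def pencil {d m : ℕ} (A : Fin d → Matrix (Fin m) (Fin m) ℂ) : MatPoly d m :=
  Matrix.of fun i j => ∑ l, MonoidAlgebra.single (FreeMonoid.of l) (A l i j)

/-- Operator norm of a matrix, acting on Euclidean space. -/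
def opNorm {ι : Type} [Fintype ι] [DecidableEq ι] (M : Matrix ι ι ℂ) : ℝ :=
  ‖Matrix.toEuclideanCLM (𝕜 := ℂ) M‖

/-- `X` is a strict row contraction: `‖X₁X₁* + ⋯ + X_dX_d*‖ < 1`. -/
def IsStrictRowContraction {d k : ℕ} (X : Fin d → Matrix (Fin k) (Fin k) ℂ) : Prop :=
  opNorm (∑ j, X j * (X j)ᴴ) < 1

/-- The column norm `‖A‖_col = ‖Σ Aⱼ*Aⱼ‖^{1/2}`. -/
def colNorm {d m : ℕ} (A : Fin d → Matrix (Fin m) (Fin m) ℂ) : ℝ :=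
  Real.sqrt (opNorm (∑ j, (A j)ᴴ * A j))

/-- The completely positive map `Ψ_X : T ↦ Σ Xⱼ T Xⱼ*`. -/
def Psi {d n : ℕ} (X : Fin d → Matrix (Fin n) (Fin n) ℂ) :
    Module.End ℂ (Matrix (Fin n) (Fin n) ℂ) where
  toFun T := ∑ j, X j * T * (X j)ᴴ
  map_add' T S := by
    simp [Matrix.mul_add, Matrix.add_mul, Finset.sum_add_distrib]
  map_smul' c T := by
    simp [Matrix.mul_smul, Matrix.smul_mul, Finset.smul_sum]

/-- The outer spectral radius `ρ(X)`: the square root of the spectral radius of `Ψ_X`. -/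
def outerRadius {d n : ℕ} (X : Fin d → Matrix (Fin n) (Fin n) ℂ) : ℝ :=
  Real.sqrt (sSup ((fun μ : ℂ => ‖μ‖) '' spectrum ℂ (Psi X)))

/-- The `N × N` dilation `diag(A, I)` of a `k × k` matrix polynomial. -/
def dilate {d k : ℕ} (A : MatPoly d k) (N : ℕ) : MatPoly d N :=
  Matrix.of fun i j =>
    if hi : (i : ℕ) < k then
      (if hj : (j : ℕ) < k then A ⟨i, hi⟩ ⟨j, hj⟩ else 0)
    else if (i : ℕ) = (j : ℕ) then 1 else 0

/-- `A` and `B` (square matrix polynomials of possibly different sizes) are stably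
associated: `P · diag(A, I) · Q = diag(B, I)` for some invertible `P, Q ∈ GL_N(ℂ⟨x⟩)`. -/
def StablyAssociated {d k l : ℕ} (A : MatPoly d k) (B : MatPoly d l) : Prop :=
  ∃ N : ℕ, k ≤ N ∧ l ≤ N ∧ ∃ P Q : MatPoly d N, IsUnit P ∧ IsUnit Q ∧
    P * dilate A N * Q = dilate B N

/-- A tuple of matrices is irreducible if it generates the full matrix algebra. -/
def IrreducibleTuple {d : ℕ} {ι : Type} [Fintype ι] [DecidableEq ι]
    (A : Fin d → Matrix ι ι ℂ) : Prop :=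
  Algebra.adjoin ℂ (Set.range A) = ⊤

/-- A regular, non-invertible matrix polynomial is an atom if it is not a product of two
non-invertible matrix polynomials. -/
def IsAtomMP {d k : ℕ} (F : MatPoly d k) : Prop :=
  IsRegular F ∧ ¬IsUnit F ∧ ∀ G H : MatPoly d k, F = G * H → IsUnit G ∨ IsUnit H

/-- `π_n(Mx) = Σ_{k=0}^n (1 − (k+1)/(n+2)) (Mx)^k`. -/
def piMx {d m : ℕ} (n : ℕ) (M : Fin d → Matrix (Fin m) (Fin m) ℂ) : MatPoly d m :=
  ∑ k ∈ Finset.range (n + 1), (1 - ((k : ℂ) + 1) / ((n : ℂ) + 2)) • pencil M ^ k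

/-!
Let `r = ‖∑ Xⱼ Xⱼᴴ‖ < 1`. Peeling off the first letter of a word, `(X^{jw})ᴴ = (X^w)ᴴ Xⱼᴴ` and
`∑ⱼ ‖Xⱼᴴ ξ‖² ≤ r ‖ξ‖²`, so by induction on the length `∑_{|w| ≤ N} ‖(X^w)ᴴ ξ‖² ≤ (1 - r)⁻¹ ‖ξ‖²`
(the constant is the fixed point of `c ↦ 1 + r c`). Cauchy–Schwarz over the coefficients then gives
`‖q(X)‖ ≤ (1 - r)^{-1/2} ‖q‖₂` for every free polynomial `q`. For large `n` the matrix
`pₙ(X) f(X) = 1 + (pₙ f - 1)(X)` is therefore invertible by the Neumann series, and matrices are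
Dedekind-finite, so `f(X)` is invertible.
-/

open scoped InnerProductSpace Matrix.Norms.L2Operator

namespace FreeMonoid

variable {α : Type*} [Fintype α] [DecidableEq α]

instance : DecidableEq (FreeMonoid α) := inferInstanceAs (DecidableEq (List α))

def wordsUpTo : ℕ → Finset (FreeMonoid α)
  | 0 => {1}
  | N + 1 => insert 1 ((Finset.univ ×ˢ wordsUpTo N).image fun jw => of jw.1 * jw.2)

theorem one_mem_wordsUpTo (N : ℕ) : (1 : FreeMonoid α) ∈ wordsUpTo N := by
  cases N <;> simp [wordsUpTo]

theorem mem_wordsUpTo_of_length_le {w : FreeMonoid α} {N : ℕ} (h : w.length ≤ N) :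
    w ∈ wordsUpTo N := by
  induction w using FreeMonoid.inductionOn' generalizing N with
  | one => exact one_mem_wordsUpTo N
  | of_mul j w ih =>
    rw [length_mul, length_of] at h
    obtain ⟨N, rfl⟩ : ∃ M, N = M + 1 := Nat.exists_eq_add_one.mpr (by omega)
    have hw : w ∈ wordsUpTo N := ih (by omega)
    simp only [wordsUpTo, Finset.mem_insert, Finset.mem_image, Finset.mem_product,
      Finset.mem_univ, true_and, Prod.exists]
    exact Or.inr ⟨j, w, hw, rfl⟩

theorem exists_subset_wordsUpTo (S : Finset (FreeMonoid α)) : ∃ N, S ⊆ wordsUpTo N :=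
  ⟨S.sup length, fun _ hw => mem_wordsUpTo_of_length_le (Finset.le_sup hw)⟩

theorem sum_wordsUpTo_succ_le {M : Type*} [AddCommMonoid M] [PartialOrder M]
    [IsOrderedAddMonoid M] {f : FreeMonoid α → M} (hf : ∀ w, 0 ≤ f w) (N : ℕ) :
    ∑ w ∈ wordsUpTo (N + 1), f w ≤ f 1 + ∑ j, ∑ w ∈ wordsUpTo N, f (of j * w) := by
  have h1 : (1 : FreeMonoid α) ∉ (Finset.univ ×ˢ wordsUpTo N).image fun jw => of jw.1 * jw.2 :=
    by simp
  rw [wordsUpTo.eq_2, Finset.sum_insert h1]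
  exact add_le_add_right ((Finset.sum_image_le_of_nonneg fun w _ => hf w).trans_eq
    (Finset.sum_product _ _ _)) _

end FreeMonoid

section RowContraction

variable {𝕜 n ι : Type*} [RCLike 𝕜] [Fintype n] [DecidableEq n]

theorem sum_norm_conjTranspose_apply_sq_le (s : Finset ι) (A : ι → Matrix n n 𝕜)
    (ξ : EuclideanSpace 𝕜 n) :
    ∑ i ∈ s, ‖toEuclideanCLM (𝕜 := 𝕜) (A i)ᴴ ξ‖ ^ 2 ≤ ‖∑ i ∈ s, A i * (A i)ᴴ‖ * ‖ξ‖ ^ 2 := by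
  have hsq : ∀ i, ‖toEuclideanCLM (𝕜 := 𝕜) (A i)ᴴ ξ‖ ^ 2 =
      RCLike.re ⟪toEuclideanCLM (𝕜 := 𝕜) (A i * (A i)ᴴ) ξ, ξ⟫_𝕜 := fun i => by
    rw [ContinuousLinearMap.apply_norm_sq_eq_inner_adjoint_left,
      ← ContinuousLinearMap.star_eq_adjoint, ← map_star, star_eq_conjTranspose,
      conjTranspose_conjTranspose, map_mul]
    rfl
  calc ∑ i ∈ s, ‖toEuclideanCLM (𝕜 := 𝕜) (A i)ᴴ ξ‖ ^ 2
      = RCLike.re ⟪toEuclideanCLM (𝕜 := 𝕜) (∑ i ∈ s, A i * (A i)ᴴ) ξ, ξ⟫_𝕜 := by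
        simp only [hsq, map_sum, FunLike.coe_sum, Finset.sum_apply, sum_inner]
    _ ≤ ‖toEuclideanCLM (𝕜 := 𝕜) (∑ i ∈ s, A i * (A i)ᴴ) ξ‖ * ‖ξ‖ := re_inner_le_norm _ _
    _ ≤ ‖∑ i ∈ s, A i * (A i)ᴴ‖ * ‖ξ‖ * ‖ξ‖ :=
        mul_le_mul_of_nonneg_right (ContinuousLinearMap.le_opNorm _ _) (norm_nonneg _)
    _ = ‖∑ i ∈ s, A i * (A i)ᴴ‖ * ‖ξ‖ ^ 2 := by ring

end RowContraction

section WordEvaluation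

variable {d k : ℕ} (X : Fin d → Matrix (Fin k) (Fin k) ℂ)

theorem isStrictRowContraction_iff : IsStrictRowContraction X ↔ ‖∑ j, X j * (X j)ᴴ‖ < 1 :=
  Iff.rfl

theorem wordEval_one : wordEval X 1 = 1 := rfl

theorem wordEval_of_mul (j : Fin d) (w : Word d) :
    wordEval X (FreeMonoid.of j * w) = X j * wordEval X w := by
  simp [wordEval]

theorem sum_norm_wordEval_conjTranspose_apply_sq_le (hX : IsStrictRowContraction X)
    (S : Finset (Word d)) (ξ : EuclideanSpace ℂ (Fin k)) :
    ∑ w ∈ S, ‖toEuclideanCLM (𝕜 := ℂ) (wordEval X w)ᴴ ξ‖ ^ 2 ≤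
      (1 - ‖∑ j, X j * (X j)ᴴ‖)⁻¹ * ‖ξ‖ ^ 2 := by
  set r := ‖∑ j, X j * (X j)ᴴ‖
  have hr : r < 1 := (isStrictRowContraction_iff X).mp hX
  have hr0 : 0 ≤ r := norm_nonneg _
  obtain ⟨N, hN⟩ := FreeMonoid.exists_subset_wordsUpTo S
  refine (Finset.sum_le_sum_of_subset_of_nonneg hN fun _ _ _ => by positivity).trans ?_
  clear hN
  induction N generalizing ξ with
  | zero =>
    have h1 : 1 ≤ (1 - r)⁻¹ := (one_le_inv₀ (by linarith)).mpr (by linarith)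
    simpa [FreeMonoid.wordsUpTo, wordEval_one] using le_mul_of_one_le_left (sq_nonneg ‖ξ‖) h1
  | succ N ih =>
    calc ∑ w ∈ FreeMonoid.wordsUpTo (N + 1), ‖toEuclideanCLM (𝕜 := ℂ) (wordEval X w)ᴴ ξ‖ ^ 2
        ≤ ‖ξ‖ ^ 2 + ∑ j, ∑ w ∈ FreeMonoid.wordsUpTo N,
            ‖toEuclideanCLM (𝕜 := ℂ) (wordEval X w)ᴴ (toEuclideanCLM (𝕜 := ℂ) (X j)ᴴ ξ)‖ ^ 2 := by
          refine (FreeMonoid.sum_wordsUpTo_succ_le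
            (f := fun w => ‖toEuclideanCLM (𝕜 := ℂ) (wordEval X w)ᴴ ξ‖ ^ 2)
            (fun _ => by positivity) N).trans_eq ?_
          simp [wordEval_of_mul, wordEval_one, conjTranspose_mul]
      _ ≤ ‖ξ‖ ^ 2 + ∑ j, (1 - r)⁻¹ * ‖toEuclideanCLM (𝕜 := ℂ) (X j)ᴴ ξ‖ ^ 2 := by
          gcongr with j
          exact ih _
      _ ≤ ‖ξ‖ ^ 2 + (1 - r)⁻¹ * (r * ‖ξ‖ ^ 2) := by
          rw [← Finset.mul_sum]
          gcongr
          exact sum_norm_conjTranspose_apply_sq_le _ X ξ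
      _ = (1 - r)⁻¹ * ‖ξ‖ ^ 2 := by
          field_simp [(by linarith : 1 - r ≠ 0)]
          ring

end WordEvaluation

namespace FreePoly

variable {d k : ℕ} (X : Fin d → Matrix (Fin k) (Fin k) ℂ)

def evalAlgHom : FreePoly d →ₐ[ℂ] Matrix (Fin k) (Fin k) ℂ :=
  MonoidAlgebra.lift ℂ (Matrix (Fin k) (Fin k) ℂ) (Word d) (FreeMonoid.lift X)

theorem evalAlgHom_apply (q : FreePoly d) : evalAlgHom X q = q.eval X := by
  rw [evalAlgHom, MonoidAlgebra.lift_apply, FreePoly.eval]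
  exact Finsupp.sum_congr fun w _ => by rw [FreeMonoid.lift_apply]; rfl

theorem conjTranspose_eval (q : FreePoly d) :
    (q.eval X)ᴴ = ∑ w ∈ q.coeff.support, star (q.coeff w) • (wordEval X w)ᴴ := by
  simp [FreePoly.eval, Finsupp.sum, conjTranspose_sum, conjTranspose_smul]

theorem norm_eval_le (hX : IsStrictRowContraction X) (q : FreePoly d) :
    ‖q.eval X‖ ≤ (√(1 - ‖∑ j, X j * (X j)ᴴ‖))⁻¹ * q.norm2 := by
  have hr : ‖∑ j, X j * (X j)ᴴ‖ < 1 := (isStrictRowContraction_iff X).mp hX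
  rw [← l2_opNorm_conjTranspose]
  refine ContinuousLinearMap.opNorm_le_bound _
    (mul_nonneg (by positivity) (Real.sqrt_nonneg _)) fun ξ => ?_
  calc ‖toEuclideanCLM (𝕜 := ℂ) (q.eval X)ᴴ ξ‖
      ≤ ∑ w ∈ q.coeff.support, ‖q.coeff w‖ * ‖toEuclideanCLM (𝕜 := ℂ) (wordEval X w)ᴴ ξ‖ := by
        rw [conjTranspose_eval, map_sum, _root_.sum_apply]
        refine (norm_sum_le _ _).trans_eq ?_
        simp [norm_smul]
    _ ≤ √(∑ w ∈ q.coeff.support, ‖q.coeff w‖ ^ 2) *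
          √(∑ w ∈ q.coeff.support, ‖toEuclideanCLM (𝕜 := ℂ) (wordEval X w)ᴴ ξ‖ ^ 2) :=
        Real.sum_mul_le_sqrt_mul_sqrt _ _ _
    _ ≤ q.norm2 * √((1 - ‖∑ j, X j * (X j)ᴴ‖)⁻¹ * ‖ξ‖ ^ 2) := by
        refine mul_le_mul le_rfl (Real.sqrt_le_sqrt ?_) (Real.sqrt_nonneg _) (Real.sqrt_nonneg _)
        exact sum_norm_wordEval_conjTranspose_apply_sq_le X hX _ ξ
    _ = (√(1 - ‖∑ j, X j * (X j)ᴴ‖))⁻¹ * q.norm2 * ‖ξ‖ := by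
        rw [Real.sqrt_mul (inv_nonneg.mpr (sub_nonneg.mpr hr.le)), Real.sqrt_sq (norm_nonneg ξ),
          Real.sqrt_inv]
        ring

end FreePoly

/-- If `‖p_n f − 1‖₂ → 0` for some sequence of free polynomials `p_n`, then `f` is
nonsingular in the row ball. -/
theorem nonsingular_is_necessary {d : ℕ} (f : FreePoly d) (p : ℕ → FreePoly d)
    (hconv : Filter.Tendsto (fun n => FreePoly.norm2 (p n * f - 1)) Filter.atTop (nhds 0)) :
    ∀ k : ℕ, 1 ≤ k → ∀ X : Fin d → Matrix (Fin k) (Fin k) ℂ,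
      IsStrictRowContraction X → IsUnit (f.eval X) := by
  intro k _ X hX
  set C := (√(1 - ‖∑ j, X j * (X j)ᴴ‖))⁻¹
  obtain ⟨n, hn⟩ :=
    ((hconv.const_mul C).eventually (gt_mem_nhds (show C * 0 < 1 by simp))).exists
  have hsmall : ‖(p n * f - 1).eval X‖ < 1 := (FreePoly.norm_eval_le X hX _).trans_lt hn
  have hprod : (p n).eval X * f.eval X = 1 - -(p n * f - 1).eval X := by
    simp [← FreePoly.evalAlgHom_apply]
  exact isUnit_of_mul_isUnit_right (hprod ▸ isUnit_one_sub_of_norm_lt_one (by rwa [norm_neg]))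
end
end

section
/- Let (a_w) be square-summable complex coefficients indexed by the words w in the letters 1,…,d (Σ_w |a_w|² < ∞), and let X = (X₁,…,X_d) be a d-tuple of k×k complex matrices with ‖X₁X₁* + ⋯ + X_dX_d*‖ < 1. Then the series Σ_w a_w X^w converges in M_k(ℂ) (where X^w denotes the product of the X_i along the word w). -/
open scoped BigOperators Kronecker
open Matrix

noncomputable section

/-! Let `T_j` be `X_j` acting on `ℂ^k` and `r = ‖Σ_j T_j T_j*‖ < 1`. Since
`Σ_j ‖T_j* v‖² = re ⟪v, (Σ_j T_j T_j*) v⟫ ≤ r ‖v‖²`, induction on the length gives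
`Σ_{|w| = n} ‖(T^w)* v‖² ≤ rⁿ ‖v‖²`. The `(i, j)` entry of `X^w` is a coordinate of
`(T^w)* e_i`, so by Cauchy–Schwarz the words of length `n` contribute at most
`‖a‖₂ · r^{n/2}` to `Σ_w |a_w| |(X^w)_{ij}|`, and the geometric series converges. -/

open ContinuousLinearMap
open scoped InnerProductSpace

namespace FreeMonoid

variable {ι : Type*} [Fintype ι]

theorem summable_of_sum_ofFn_le {f : FreeMonoid ι → ℝ} (hf : 0 ≤ f) {c : ℕ → ℝ}
    (hc : Summable c) (h : ∀ n, ∑ t : Fin n → ι, f (ofList (List.ofFn t)) ≤ c n) :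
    Summable f := by
  have hσ : Summable fun p : Σ n, Fin n → ι => f (ofList (List.ofFn p.2)) := by
    refine (summable_sigma_of_nonneg fun _ => hf _).2 ⟨fun n => (hasSum_fintype _).summable,
      hc.of_nonneg_of_le (fun n => tsum_nonneg fun _ => hf _) fun n => ?_⟩
    rw [tsum_fintype]
    exact h n
  exact (toList.trans List.equivSigmaTuple).symm.summable_iff.1 hσ

theorem sum_ofFn_le_tsum {f : FreeMonoid ι → ℝ} (hf : 0 ≤ f) (hs : Summable f) (n : ℕ) :
    ∑ t : Fin n → ι, f (ofList (List.ofFn t)) ≤ ∑' w, f w := by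
  let e : (Fin n → ι) ↪ FreeMonoid ι :=
    ⟨fun t => ofList (List.ofFn t), ofList.injective.comp List.ofFn_injective⟩
  simpa [e] using hs.sum_le_tsum (Finset.univ.map e) fun w _ => hf w

theorem summable_mul_of_sum_ofFn_sq_le {a g : FreeMonoid ι → ℝ} (ha₀ : 0 ≤ a) (hg₀ : 0 ≤ g)
    (ha : Summable fun w => a w ^ 2) {C ρ : ℝ} (hρ₀ : 0 ≤ ρ) (hρ₁ : ρ < 1)
    (hg : ∀ n, ∑ t : Fin n → ι, g (ofList (List.ofFn t)) ^ 2 ≤ C * ρ ^ n) :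
    Summable (a * g) := by
  have hsqrt_pow (n : ℕ) : √(ρ ^ n) = √ρ ^ n := by
    rw [← Real.sq_sqrt hρ₀, ← pow_mul, mul_comm, pow_mul, Real.sqrt_sq (by positivity),
      Real.sqrt_sq (by positivity)]
  refine summable_of_sum_ofFn_le (mul_nonneg ha₀ hg₀)
    ((summable_geometric_of_lt_one (Real.sqrt_nonneg ρ) ?_).mul_left
      (√(∑' w, a w ^ 2) * √C)) fun n => ?_
  · simpa using Real.sqrt_lt_sqrt hρ₀ hρ₁
  calc ∑ t : Fin n → ι, a (ofList (List.ofFn t)) * g (ofList (List.ofFn t))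
      ≤ √(∑ t : Fin n → ι, a (ofList (List.ofFn t)) ^ 2) *
          √(∑ t : Fin n → ι, g (ofList (List.ofFn t)) ^ 2) :=
        Real.sum_mul_le_sqrt_mul_sqrt _ _ _
    _ ≤ √(∑' w, a w ^ 2) * √(C * ρ ^ n) := by
        gcongr
        · exact sum_ofFn_le_tsum (fun w => sq_nonneg (a w)) ha n
        · exact hg n
    _ = √(∑' w, a w ^ 2) * √C * √ρ ^ n := by
        rw [Real.sqrt_mul' _ (by positivity), hsqrt_pow, mul_assoc]

end FreeMonoid

section HilbertSpace

open FreeMonoid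

variable {ι E : Type*} [Fintype ι] [NormedAddCommGroup E] [InnerProductSpace ℂ E]
  [CompleteSpace E]

theorem sum_norm_adjoint_apply_sq_le (T : ι → E →L[ℂ] E) (v : E) :
    ∑ j, ‖adjoint (T j) v‖ ^ 2 ≤ ‖∑ j, T j * adjoint (T j)‖ * ‖v‖ ^ 2 := by
  have hsum : ∑ j, ‖adjoint (T j) v‖ ^ 2 = RCLike.re ⟪v, (∑ j, T j * adjoint (T j)) v⟫_ℂ := by
    simp only [apply_norm_sq_eq_inner_adjoint_right, adjoint_adjoint, _root_.sum_apply,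
      inner_sum, map_sum, mul_def]
  calc ∑ j, ‖adjoint (T j) v‖ ^ 2 = RCLike.re ⟪v, (∑ j, T j * adjoint (T j)) v⟫_ℂ := hsum
    _ ≤ ‖v‖ * ‖(∑ j, T j * adjoint (T j)) v‖ := re_inner_le_norm _ _
    _ ≤ ‖v‖ * (‖∑ j, T j * adjoint (T j)‖ * ‖v‖) := by gcongr; exact le_opNorm _ _
    _ = ‖∑ j, T j * adjoint (T j)‖ * ‖v‖ ^ 2 := by ring

theorem sum_norm_adjoint_lift_ofFn_apply_sq_le (T : ι → E →L[ℂ] E) (n : ℕ) (v : E) :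
    ∑ t : Fin n → ι, ‖adjoint (lift T (ofList (List.ofFn t))) v‖ ^ 2
      ≤ ‖∑ j, T j * adjoint (T j)‖ ^ n * ‖v‖ ^ 2 := by
  induction n generalizing v with
  | zero => simp [adjoint_one]
  | succ n ih =>
    set r := ‖∑ j, T j * adjoint (T j)‖
    calc ∑ t : Fin (n + 1) → ι, ‖adjoint (lift T (ofList (List.ofFn t))) v‖ ^ 2
        = ∑ j, ∑ t : Fin n → ι,
            ‖adjoint (lift T (ofList (List.ofFn t))) (adjoint (T j) v)‖ ^ 2 := by
          rw [← (Fin.consEquiv fun _ => ι).sum_comp, Fintype.sum_prod_type]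
          simp [Fin.consEquiv, List.ofFn_succ, ofList_cons, mul_def, adjoint_comp]
      _ ≤ ∑ j, r ^ n * ‖adjoint (T j) v‖ ^ 2 := Finset.sum_le_sum fun j _ => ih _
      _ = r ^ n * ∑ j, ‖adjoint (T j) v‖ ^ 2 := (Finset.mul_sum _ _ _).symm
      _ ≤ r ^ n * (r * ‖v‖ ^ 2) := by gcongr; exact sum_norm_adjoint_apply_sq_le T v
      _ = r ^ (n + 1) * ‖v‖ ^ 2 := by ring

theorem summable_norm_mul_norm_adjoint_lift_apply {F : Type*} [SeminormedAddCommGroup F]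
    {a : FreeMonoid ι → F} (ha : Summable fun w => ‖a w‖ ^ 2) {T : ι → E →L[ℂ] E}
    (hT : ‖∑ j, T j * adjoint (T j)‖ < 1) (v : E) :
    Summable fun w => ‖a w‖ * ‖adjoint (lift T w) v‖ :=
  summable_mul_of_sum_ofFn_sq_le (fun _ => norm_nonneg _) (fun _ => norm_nonneg _) ha
    (norm_nonneg _) hT fun n =>
      (sum_norm_adjoint_lift_ofFn_apply_sq_le T n v).trans_eq (mul_comm _ _)

end HilbertSpace

theorem Matrix.norm_apply_le_norm_adjoint_toEuclideanCLM_single {𝕜 n : Type*} [RCLike 𝕜]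
    [Fintype n] [DecidableEq n] (M : Matrix n n 𝕜) (i j : n) :
    ‖M i j‖ ≤ ‖adjoint (toEuclideanCLM (𝕜 := 𝕜) M) (EuclideanSpace.single i 1)‖ := by
  rw [← star_eq_adjoint, ← map_star]
  calc ‖M i j‖ = ‖toEuclideanCLM (𝕜 := 𝕜) (star M) (EuclideanSpace.single i 1) j‖ := by
        simp [EuclideanSpace.single, Matrix.mulVec_single]
    _ ≤ _ := PiLp.norm_apply_le _ _

theorem toEuclideanCLM_wordEval {d k : ℕ} (X : Fin d → Matrix (Fin k) (Fin k) ℂ) (w : Word d) :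
    toEuclideanCLM (𝕜 := ℂ) (wordEval X w) =
      FreeMonoid.lift (fun j => toEuclideanCLM (𝕜 := ℂ) (X j)) w := by
  simp [wordEval, FreeMonoid.lift_apply, map_list_prod, List.map_map, Function.comp_def]

/-- For square-summable coefficients `(a_w)` and a strict row contraction `X`, the series
`Σ_w a_w X^w` converges in `M_k(ℂ)`. -/
theorem fock_series_converges {d k : ℕ} (a : Word d → ℂ)
    (ha : Summable fun w : Word d => ‖a w‖ ^ 2)
    (X : Fin d → Matrix (Fin k) (Fin k) ℂ) (hX : IsStrictRowContraction X) :
    Summable fun w : Word d => a w • wordEval X w := by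
  set T : Fin d → _ := fun j => toEuclideanCLM (𝕜 := ℂ) (X j)
  have hT : ‖∑ j, T j * adjoint (T j)‖ < 1 := by
    have hTX : ∑ j, T j * adjoint (T j) = toEuclideanCLM (𝕜 := ℂ) (∑ j, X j * (X j)ᴴ) := by
      simp only [T, map_sum, map_mul, ← star_eq_adjoint, ← map_star, star_eq_conjTranspose]
    rwa [hTX]
  refine Pi.summable.2 fun i => Pi.summable.2 fun j => ?_
  refine (summable_norm_mul_norm_adjoint_lift_apply ha hT
    (EuclideanSpace.single i 1)).of_norm_bounded fun w => ?_
  rw [Matrix.smul_apply, norm_smul, ← toEuclideanCLM_wordEval]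
  gcongr
  exact Matrix.norm_apply_le_norm_adjoint_toEuclideanCLM_single _ i j
end
end

section
/- Let A = (A₁,…,A_d) be a d-tuple of m×m complex matrices and let P(x) = A₁x₁ + ⋯ + A_dx_d be the corresponding homogeneous linear matrix pencil. Then the left multiplication operator F ↦ PF on m×m-matrix-valued free polynomials has operator norm (with respect to the ℓ² norm ‖·‖₂ on coefficients) equal to ‖A‖_col := ‖A₁*A₁ + ⋯ + A_d*A_d‖^{1/2}. -/
open scoped BigOperators Kronecker
open Matrix

noncomputable section

/-!
The coefficient of `xₗ w` in `(Ax)F` is `Aₗ F_w`, and `(Ax)F` has no constant term, so column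
by column `‖(Ax)F‖₂² = Σ_{w,j} Σₗ ‖Aₗ (F_w eⱼ)‖² = Σ_{w,j} ‖S (F_w eⱼ)‖²`, where `S` is the
column `[A₁; …; A_d]`. Hence the multiplier norm is the operator norm `‖S‖`, attained on constant
polynomials `x eⱼᵀ`, and `‖S‖² = ‖S* S‖ = ‖Σ Aₗ* Aₗ‖` by the C*-identity.
-/

open scoped Matrix.Norms.L2Operator

section ColStack

variable {𝕜 ι m n : Type*} [RCLike 𝕜] [Fintype ι] [Fintype m]

def colStack (A : ι → Matrix m n 𝕜) : Matrix (ι × m) n 𝕜 :=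
  Matrix.of fun p k => A p.1 p.2 k

lemma conjTranspose_colStack_mul_colStack (A : ι → Matrix m n 𝕜) :
    (colStack A)ᴴ * colStack A = ∑ l, (A l)ᴴ * A l := by
  ext i k
  simp [colStack, Matrix.mul_apply, Matrix.sum_apply, Fintype.sum_prod_type]

lemma norm_toEuclideanLin_colStack_sq [Fintype n] [DecidableEq n] (A : ι → Matrix m n 𝕜)
    (x : EuclideanSpace 𝕜 n) :
    ‖toEuclideanLin (colStack A) x‖ ^ 2 = ∑ l, ‖toEuclideanLin (A l) x‖ ^ 2 := by
  simp only [EuclideanSpace.norm_sq_eq, Fintype.sum_prod_type]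
  rfl

end ColStack

lemma colNorm_eq_norm_colStack {d m : ℕ} (A : Fin d → Matrix (Fin m) (Fin m) ℂ) :
    colNorm A = ‖colStack A‖ := by
  rw [colNorm, opNorm, l2_opNorm_toEuclideanCLM, ← conjTranspose_colStack_mul_colStack,
    l2_opNorm_conjTranspose_mul_self, Real.sqrt_mul_self (norm_nonneg _)]

lemma FreeMonoid.of_mul_injective {α : Type*} :
    Function.Injective fun p : α × FreeMonoid α => FreeMonoid.of p.1 * p.2 := by
  rintro ⟨a, u⟩ ⟨b, v⟩ h
  obtain ⟨hab, huv⟩ := List.cons_eq_cons.1 (congrArg FreeMonoid.toList h)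
  exact Prod.ext hab (FreeMonoid.toList.injective huv)

lemma FreePoly.normSq_eq_sum_of_support_subset {d : ℕ} {p : FreePoly d} {s : Finset (Word d)}
    (hs : p.coeff.support ⊆ s) : p.normSq = ∑ w ∈ s, ‖p.coeff w‖ ^ 2 :=
  Finsupp.sum_of_support_subset _ hs _ fun _ _ => by simp

namespace MatPoly

variable {d m : ℕ}

lemma exists_support_subset (F : MatPoly d m) :
    ∃ s : Finset (Word d), ∀ i j, (F i j).coeff.support ⊆ s := by
  classical
  exact ⟨Finset.univ.biUnion fun i => Finset.univ.biUnion fun j => (F i j).coeff.support,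
    fun i j _ hw => Finset.mem_biUnion.2 ⟨i, Finset.mem_univ _,
      Finset.mem_biUnion.2 ⟨j, Finset.mem_univ _, hw⟩⟩⟩

def coeffCol (F : MatPoly d m) (w : Word d) (j : Fin m) : EuclideanSpace ℂ (Fin m) :=
  WithLp.toLp 2 fun k => (F k j).coeff w

lemma normSq_eq_sum_coeffCol {F : MatPoly d m} {s : Finset (Word d)}
    (hs : ∀ i j, (F i j).coeff.support ⊆ s) :
    F.normSq = ∑ w ∈ s, ∑ j, ‖F.coeffCol w j‖ ^ 2 := by
  simp only [normSq, FreePoly.normSq_eq_sum_of_support_subset (hs _ _), EuclideanSpace.norm_sq_eq,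
    coeffCol]
  rw [Finset.sum_comm, Finset.sum_congr rfl fun _ _ => Finset.sum_comm]
  exact Finset.sum_comm

def singleCol (j₀ : Fin m) (x : EuclideanSpace ℂ (Fin m)) : MatPoly d m :=
  Matrix.of fun k j =>
    MonoidAlgebra.single 1 ((Pi.single j₀ x : Fin m → EuclideanSpace ℂ (Fin m)) j k)

lemma support_singleCol_subset (j₀ : Fin m) (x : EuclideanSpace ℂ (Fin m)) (k j : Fin m) :
    ((singleCol j₀ x : MatPoly d m) k j).coeff.support ⊆ {1} :=
  Finsupp.support_single_subset

lemma sum_coeffCol_singleCol (j₀ : Fin m) (x : EuclideanSpace ℂ (Fin m))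
    (g : EuclideanSpace ℂ (Fin m) → ℝ) (hg : g 0 = 0) :
    ∑ w ∈ {1}, ∑ j, g ((singleCol j₀ x : MatPoly d m).coeffCol w j) = g x := by
  have hcol : ∀ j, (singleCol j₀ x : MatPoly d m).coeffCol 1 j =
      (Pi.single j₀ x : Fin m → EuclideanSpace ℂ (Fin m)) j := fun j => by
    ext k
    simp [coeffCol, singleCol]
  rw [Finset.sum_singleton, Fintype.sum_eq_single j₀ fun j hj => by
    rw [hcol, Pi.single_eq_of_ne hj, hg], hcol, Pi.single_eq_same]

end MatPoly

section PencilMul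

variable {d m : ℕ} (A : Fin d → Matrix (Fin m) (Fin m) ℂ)

lemma pencil_mul_apply (F : MatPoly d m) (i j : Fin m) :
    (pencil A * F) i j = ∑ k, ∑ l, MonoidAlgebra.single (FreeMonoid.of l) (A l i k) * F k j := by
  simp [Matrix.mul_apply, pencil, Finset.sum_mul]

lemma coeffCol_pencil_mul (F : MatPoly d m) (l : Fin d) (w : Word d) (j : Fin m) :
    MatPoly.coeffCol (pencil A * F) (FreeMonoid.of l * w) j =
      toEuclideanLin (A l) (F.coeffCol w j) := by
  ext i
  simp only [MatPoly.coeffCol, pencil_mul_apply, MonoidAlgebra.coeff_sum, Finsupp.finsetSum_apply,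
    toLpLin_toLp, toLin'_apply, mulVec, dotProduct]
  refine Finset.sum_congr rfl fun k _ => ?_
  rw [Finset.sum_eq_single l]
  · exact MonoidAlgebra.coeff_single_mul_mul _ _ _ _
  · intro l' _ hl'
    refine MonoidAlgebra.coeff_single_mul_of_forall_mul_ne _ _ fun v h => hl' ?_
    exact congrArg Prod.fst (FreeMonoid.of_mul_injective (a₁ := (l', v)) (a₂ := (l, w)) h)
  · simp

lemma support_pencil_mul_subset {F : MatPoly d m} {s : Finset (Word d)}
    (hs : ∀ i j, (F i j).coeff.support ⊆ s) (i j : Fin m) :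
    ((pencil A * F) i j).coeff.support ⊆
      (Finset.univ ×ˢ s).map ⟨_, FreeMonoid.of_mul_injective⟩ := by
  classical
  rw [pencil_mul_apply]
  simp only [MonoidAlgebra.coeff_sum]
  refine Finsupp.support_finsetSum.trans (Finset.biUnion_subset.2 fun k _ => ?_)
  refine Finsupp.support_finsetSum.trans (Finset.biUnion_subset.2 fun l _ => ?_)
  refine (MonoidAlgebra.support_coeff_single_mul_subset _ _ _).trans fun u hu => ?_
  obtain ⟨w, hw, rfl⟩ := Finset.mem_image.1 hu
  exact Finset.mem_map.2 ⟨(l, w), Finset.mem_product.2 ⟨Finset.mem_univ _, hs k j hw⟩, rfl⟩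

lemma normSq_pencil_mul {F : MatPoly d m} {s : Finset (Word d)}
    (hs : ∀ i j, (F i j).coeff.support ⊆ s) :
    MatPoly.normSq (pencil A * F) =
      ∑ w ∈ s, ∑ j, ‖toEuclideanLin (colStack A) (F.coeffCol w j)‖ ^ 2 := by
  rw [MatPoly.normSq_eq_sum_coeffCol (support_pencil_mul_subset A hs), Finset.sum_map,
    Finset.sum_product, Finset.sum_comm]
  simp only [Function.Embedding.coeFn_mk, coeffCol_pencil_mul, norm_toEuclideanLin_colStack_sq]
  exact Finset.sum_congr rfl fun w _ => Finset.sum_comm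

lemma normSq_pencil_mul_le (F : MatPoly d m) :
    MatPoly.normSq (pencil A * F) ≤ ‖colStack A‖ ^ 2 * F.normSq := by
  obtain ⟨s, hs⟩ := F.exists_support_subset
  rw [normSq_pencil_mul A hs, MatPoly.normSq_eq_sum_coeffCol hs, Finset.mul_sum]
  refine Finset.sum_le_sum fun w _ => ?_
  rw [Finset.mul_sum]
  refine Finset.sum_le_sum fun j _ => ?_
  rw [← mul_pow]
  exact pow_le_pow_left₀ (norm_nonneg _) ((colStack A).l2_opNorm_mulVec _) 2

lemma norm_colStack_le_of_pencil_mul_le {C : ℝ} (hC : 0 ≤ C)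
    (h : ∀ F : MatPoly d m, MatPoly.norm2 (pencil A * F) ≤ C * MatPoly.norm2 F) :
    ‖colStack A‖ ≤ C := by
  refine ContinuousLinearMap.opNorm_le_bound _ hC fun x => ?_
  rcases isEmpty_or_nonempty (Fin m) with _ | ⟨⟨j₀⟩⟩
  · simp [Subsingleton.elim x 0]
  have hs := MatPoly.support_singleCol_subset (d := d) j₀ x
  have hF := h (MatPoly.singleCol j₀ x)
  rwa [MatPoly.norm2, MatPoly.norm2, normSq_pencil_mul A hs, MatPoly.normSq_eq_sum_coeffCol hs,
    MatPoly.sum_coeffCol_singleCol _ _ (fun y => ‖toEuclideanLin (colStack A) y‖ ^ 2) (by simp),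
    MatPoly.sum_coeffCol_singleCol _ _ (‖·‖ ^ 2) (by simp),
    Real.sqrt_sq (norm_nonneg _), Real.sqrt_sq (norm_nonneg _)] at hF

end PencilMul

/-- The left multiplication operator `F ↦ (Ax)F` on `M_m(ℂ⟨x⟩)` has operator norm (with
respect to the ℓ² coefficient norm) exactly `‖A‖_col`. -/
theorem pencil_mult_norm {d m : ℕ} (A : Fin d → Matrix (Fin m) (Fin m) ℂ) :
    (∀ F : MatPoly d m, MatPoly.norm2 (pencil A * F) ≤ colNorm A * MatPoly.norm2 F) ∧
    (∀ C : ℝ, 0 ≤ C →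
      (∀ F : MatPoly d m, MatPoly.norm2 (pencil A * F) ≤ C * MatPoly.norm2 F) →
      colNorm A ≤ C) := by
  rw [colNorm_eq_norm_colStack]
  refine ⟨fun F => ?_, fun C hC h => norm_colStack_le_of_pencil_mul_le A hC h⟩
  calc MatPoly.norm2 (pencil A * F) ≤ √(‖colStack A‖ ^ 2 * F.normSq) :=
        Real.sqrt_le_sqrt (normSq_pencil_mul_le A F)
    _ = ‖colStack A‖ * MatPoly.norm2 F := by
        rw [Real.sqrt_mul (sq_nonneg _), Real.sqrt_sq (norm_nonneg _), MatPoly.norm2]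
end
end

section
/- Suppose the matrix free polynomials F ∈ M_k(ℂ⟨x⟩) and G ∈ M_ℓ(ℂ⟨x⟩) are stably associated. Let P_n and Q_n denote their respective nth-degree optimal polynomial approximants, i.e. P_n minimizes ‖PF − I‖₂ over matrix polynomials P of degree ≤ n, and similarly for Q_n. Then there exist constants C₁, C₂ ∈ ℝ and D₁, D₂ ∈ ℕ such that for all sufficiently large n: C₁‖P_{n+D₁}F − I‖₂² ≤ ‖Q_nG − I‖₂² ≤ C₂‖P_{n−D₂}F − I‖₂². -/
open scoped BigOperators Kronecker
open Matrix

noncomputable section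

/-! Stable association `P diag(F, I) Q = diag(G, I)` transports approximants of `F` to approximants
of `G`: for `R` of degree `n`, the upper-left block `R'` of `Q⁻¹ diag(R, I) P⁻¹` has degree at most
`n + D`, and `R' G - I` is the upper-left block of `Q⁻¹ diag(R F - I, 0) Q`. Multiplication by a fixed
matrix polynomial is bounded for the coefficient ℓ² norm, so `‖R' G - I‖₂² ≤ C ‖R F - I‖₂²`.
Optimality of `Q_{n+D}` then bounds it by `C ‖P_n F - I‖₂²`, and exchanging `F` and `G` gives the
other inequality. -/

open Finset

section

variable {d : ℕ}

namespace FreePoly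

lemma normSq_eq_sum (p : FreePoly d) : p.normSq = ∑ w ∈ p.coeff.support, ‖p.coeff w‖ ^ 2 := rfl

lemma normSq_nonneg (p : FreePoly d) : 0 ≤ p.normSq :=
  sum_nonneg fun _ _ => by positivity

lemma normSq_eq_sum_of_support_subset_s9 (p : FreePoly d) {S : Finset (Word d)}
    (hS : p.coeff.support ⊆ S) : p.normSq = ∑ w ∈ S, ‖p.coeff w‖ ^ 2 :=
  Finsupp.sum_of_support_subset p.coeff hS _ fun _ _ => by simp

lemma normSq_sum_le {ι : Type*} (s : Finset ι) (f : ι → FreePoly d) :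
    normSq (∑ i ∈ s, f i) ≤ #s * ∑ i ∈ s, (f i).normSq := by
  classical
  set S := s.biUnion fun i => (f i).coeff.support
  have hsupp : (∑ i ∈ s, f i).coeff.support ⊆ S := by
    intro w hw
    rw [MonoidAlgebra.coeff_sum] at hw
    obtain ⟨i, hi, hwi⟩ := Finsupp.mem_support_finsetSum w hw
    exact mem_biUnion.mpr ⟨i, hi, hwi⟩
  have hcoeff (w : Word d) :
      ‖(∑ i ∈ s, f i).coeff w‖ ^ 2 ≤ #s * ∑ i ∈ s, ‖(f i).coeff w‖ ^ 2 := by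
    have htri : ‖(∑ i ∈ s, f i).coeff w‖ ≤ ∑ i ∈ s, ‖(f i).coeff w‖ := by
      rw [MonoidAlgebra.coeff_sum, sum_apply']
      exact norm_sum_le _ _
    exact (pow_le_pow_left₀ (norm_nonneg _) htri 2).trans sq_sum_le_card_mul_sum_sq
  calc normSq (∑ i ∈ s, f i)
      = ∑ w ∈ S, ‖(∑ i ∈ s, f i).coeff w‖ ^ 2 := normSq_eq_sum_of_support_subset_s9 _ hsupp
    _ ≤ ∑ w ∈ S, #s * ∑ i ∈ s, ‖(f i).coeff w‖ ^ 2 := sum_le_sum fun w _ => hcoeff w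
    _ = #s * ∑ i ∈ s, ∑ w ∈ S, ‖(f i).coeff w‖ ^ 2 := by rw [← mul_sum, sum_comm]
    _ = #s * ∑ i ∈ s, (f i).normSq := by
      congr 1
      refine sum_congr rfl fun i hi => (normSq_eq_sum_of_support_subset_s9 _ ?_).symm
      exact subset_biUnion_of_mem (fun i => (f i).coeff.support) hi

lemma normSq_single_mul (u : Word d) (c : ℂ) (q : FreePoly d) :
    normSq (MonoidAlgebra.single u c * q) = ‖c‖ ^ 2 * q.normSq := by
  classical
  rw [normSq_eq_sum_of_support_subset_s9 _ (MonoidAlgebra.support_coeff_single_mul_subset q c u),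
    sum_image fun a _ b _ h => mul_left_cancel h, normSq_eq_sum, mul_sum]
  refine sum_congr rfl fun v _ => ?_
  rw [MonoidAlgebra.coeff_single_mul_eq_mul_coeff v fun a _ =>
    ⟨fun h => mul_left_cancel h, fun h => by rw [h]⟩, norm_mul, mul_pow]

lemma normSq_mul_single (u : Word d) (c : ℂ) (q : FreePoly d) :
    normSq (q * MonoidAlgebra.single u c) = ‖c‖ ^ 2 * q.normSq := by
  classical
  rw [normSq_eq_sum_of_support_subset_s9 _ (MonoidAlgebra.support_coeff_mul_single_subset q c u),
    sum_image fun a _ b _ h => mul_right_cancel h, normSq_eq_sum, mul_sum]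
  refine sum_congr rfl fun v _ => ?_
  rw [MonoidAlgebra.coeff_mul_single_eq_coeff_mul v fun a _ =>
    ⟨fun h => mul_right_cancel h, fun h => by rw [h]⟩, norm_mul, mul_pow, mul_comm]

/-- `p q = ∑ᵤ pᵤ xᵘ q` with `‖pᵤ xᵘ q‖₂ = |pᵤ| ‖q‖₂`; apply Cauchy–Schwarz to the `#supp p` terms. -/
lemma normSq_mul_le_left (p q : FreePoly d) :
    normSq (p * q) ≤ #p.coeff.support * p.normSq * q.normSq := by
  conv_lhs => rw [← MonoidAlgebra.sum_coeff_single p, Finsupp.sum, sum_mul]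
  refine (normSq_sum_le _ _).trans_eq ?_
  simp only [normSq_single_mul, ← sum_mul, ← normSq_eq_sum, mul_assoc]

lemma normSq_mul_le_right (p q : FreePoly d) :
    normSq (p * q) ≤ #q.coeff.support * q.normSq * p.normSq := by
  conv_lhs => rw [← MonoidAlgebra.sum_coeff_single q, Finsupp.sum, mul_sum]
  refine (normSq_sum_le _ _).trans_eq ?_
  simp only [normSq_mul_single, ← sum_mul, ← normSq_eq_sum, mul_assoc]

lemma degLE_mono {p : FreePoly d} {a b : ℕ} (h : p.degLE a) (hab : a ≤ b) : p.degLE b :=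
  fun w hw => (h w hw).trans hab

lemma degLE_zero (n : ℕ) : (0 : FreePoly d).degLE n := by
  simp [degLE]

lemma degLE_one (n : ℕ) : (1 : FreePoly d).degLE n := by
  intro w hw
  rw [Finset.mem_singleton.mp (Finsupp.support_single_subset hw)]
  simp

lemma degLE_sum {ι : Type*} {s : Finset ι} {f : ι → FreePoly d} {n : ℕ}
    (h : ∀ i ∈ s, (f i).degLE n) : (∑ i ∈ s, f i).degLE n := by
  intro w hw
  rw [MonoidAlgebra.coeff_sum] at hw
  obtain ⟨i, hi, hwi⟩ := Finsupp.mem_support_finsetSum w hw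
  exact h i hi w hwi

lemma degLE_mul {p q : FreePoly d} {a b : ℕ} (hp : p.degLE a) (hq : q.degLE b) :
    (p * q).degLE (a + b) := by
  classical
  intro w hw
  obtain ⟨u, hu, v, hv, rfl⟩ := mem_mul.mp (MonoidAlgebra.support_coeff_mul_subset p q hw)
  simpa using add_le_add (hp u hu) (hq v hv)

lemma exists_degLE (p : FreePoly d) : ∃ n, p.degLE n :=
  ⟨p.coeff.support.sup fun w => w.toList.length, fun _ hw => le_sup hw⟩

end FreePoly

lemma single_le_sum_sum {ι κ M : Type*} [Fintype ι] [Fintype κ] [AddCommMonoid M] [Preorder M]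
    [AddLeftMono M] {f : ι → κ → M}
    (hf : ∀ i j, 0 ≤ f i j) (i : ι) (j : κ) : f i j ≤ ∑ i, ∑ j, f i j :=
  (single_le_sum (fun j _ => hf i j) (mem_univ j)).trans
    (single_le_sum (f := fun i => ∑ j, f i j) (fun i _ => sum_nonneg fun j _ => hf i j)
      (mem_univ i))

namespace MatPoly

variable {k : ℕ}

lemma normSq_nonneg (A : MatPoly d k) : 0 ≤ A.normSq :=
  sum_nonneg fun _ _ => sum_nonneg fun _ _ => FreePoly.normSq_nonneg _

lemma normSq_apply_le (A : MatPoly d k) (i j : Fin k) : (A i j).normSq ≤ A.normSq :=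
  single_le_sum_sum (fun _ _ => FreePoly.normSq_nonneg _) i j

lemma normSq_le_of_forall_le {A : MatPoly d k} {b : ℝ} (h : ∀ i j, (A i j).normSq ≤ b) :
    A.normSq ≤ k ^ 2 * b := by
  calc A.normSq ≤ ∑ _i : Fin k, ∑ _j : Fin k, b :=
        sum_le_sum fun i _ => sum_le_sum fun j _ => h i j
    _ = k ^ 2 * b := by simp [sq, mul_assoc]

lemma normSq_mul_apply_le (A B : MatPoly d k) (i j : Fin k) :
    ((A * B) i j).normSq ≤ k * ∑ s, (A i s * B s j).normSq := by
  rw [mul_apply]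
  simpa using FreePoly.normSq_sum_le univ fun s => A i s * B s j

lemma exists_normSq_mul_le_left (U : MatPoly d k) :
    ∃ C, 0 ≤ C ∧ ∀ A : MatPoly d k, MatPoly.normSq (U * A) ≤ C * A.normSq := by
  have hc0 (i s) : 0 ≤ #(U i s).coeff.support * (U i s).normSq :=
    mul_nonneg (by positivity) (FreePoly.normSq_nonneg _)
  set c : ℝ := ∑ i, ∑ s, #(U i s).coeff.support * (U i s).normSq
  have hc : 0 ≤ c := sum_nonneg fun _ _ => sum_nonneg fun _ _ => hc0 _ _
  refine ⟨k ^ 2 * (k * (k * c)), by positivity, fun A =>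
    (normSq_le_of_forall_le (b := k * (k * c) * A.normSq) fun i j => ?_).trans_eq (by ring)⟩
  calc ((U * A) i j).normSq ≤ k * ∑ s, (U i s * A s j).normSq := normSq_mul_apply_le U A i j
    _ ≤ k * ∑ _s : Fin k, c * A.normSq := by
      gcongr with s
      exact (FreePoly.normSq_mul_le_left _ _).trans <| mul_le_mul
        (single_le_sum_sum hc0 i s) (normSq_apply_le A s j) (FreePoly.normSq_nonneg _) hc
    _ = k * (k * c) * A.normSq := by simp [mul_assoc]

lemma exists_normSq_mul_le_right (V : MatPoly d k) :
    ∃ C, 0 ≤ C ∧ ∀ A : MatPoly d k, MatPoly.normSq (A * V) ≤ C * A.normSq := by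
  have hc0 (s j) : 0 ≤ #(V s j).coeff.support * (V s j).normSq :=
    mul_nonneg (by positivity) (FreePoly.normSq_nonneg _)
  set c : ℝ := ∑ s, ∑ j, #(V s j).coeff.support * (V s j).normSq
  have hc : 0 ≤ c := sum_nonneg fun _ _ => sum_nonneg fun _ _ => hc0 _ _
  refine ⟨k ^ 2 * (k * (k * c)), by positivity, fun A =>
    (normSq_le_of_forall_le (b := k * (k * c) * A.normSq) fun i j => ?_).trans_eq (by ring)⟩
  calc ((A * V) i j).normSq ≤ k * ∑ s, (A i s * V s j).normSq := normSq_mul_apply_le A V i j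
    _ ≤ k * ∑ _s : Fin k, c * A.normSq := by
      gcongr with s
      exact (FreePoly.normSq_mul_le_right _ _).trans <| mul_le_mul
        (single_le_sum_sum hc0 s j) (normSq_apply_le A i s) (FreePoly.normSq_nonneg _) hc
    _ = k * (k * c) * A.normSq := by simp [mul_assoc]

lemma exists_normSq_mul_mul_le (U V : MatPoly d k) :
    ∃ C > 0, ∀ A : MatPoly d k, MatPoly.normSq (U * A * V) ≤ C * A.normSq := by
  obtain ⟨C₁, hC₁, hU⟩ := exists_normSq_mul_le_left U
  obtain ⟨C₂, hC₂, hV⟩ := exists_normSq_mul_le_right V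
  refine ⟨C₂ * C₁ + 1, by positivity, fun A => ?_⟩
  calc MatPoly.normSq (U * A * V) ≤ C₂ * MatPoly.normSq (U * A) := hV _
    _ ≤ C₂ * (C₁ * A.normSq) := by gcongr; exact hU A
    _ ≤ (C₂ * C₁ + 1) * A.normSq := by nlinarith [normSq_nonneg A]

lemma degLE_mono {A : MatPoly d k} {a b : ℕ} (h : A.degLE a) (hab : a ≤ b) : A.degLE b :=
  fun i j => FreePoly.degLE_mono (h i j) hab

lemma degLE_mul {A B : MatPoly d k} {a b : ℕ} (hA : A.degLE a) (hB : B.degLE b) :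
    MatPoly.degLE (A * B) (a + b) :=
  fun i j => FreePoly.degLE_sum fun s _ => FreePoly.degLE_mul (hA i s) (hB s j)

lemma exists_degLE (A : MatPoly d k) : ∃ n, A.degLE n := by
  choose n hn using fun i j => (A i j).exists_degLE
  exact ⟨∑ i, ∑ j, n i j, fun i j =>
    FreePoly.degLE_mono (hn i j) (single_le_sum_sum (fun _ _ => Nat.zero_le _) i j)⟩

lemma degLE_dilate {A : MatPoly d k} {n : ℕ} (hA : A.degLE n) (N : ℕ) :
    (dilate A N).degLE n := by
  intro i j
  simp only [dilate, of_apply]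
  split_ifs
  exacts [hA _ _, FreePoly.degLE_zero n, FreePoly.degLE_one n, FreePoly.degLE_zero n]

end MatPoly

def finSumFinEquivOfLE {k N : ℕ} (hk : k ≤ N) : Fin k ⊕ Fin (N - k) ≃ Fin N :=
  finSumFinEquiv.trans (finCongr (Nat.add_sub_of_le hk))

@[simp] lemma finSumFinEquivOfLE_inl_val {k N : ℕ} (hk : k ≤ N) (i : Fin k) :
    (finSumFinEquivOfLE hk (Sum.inl i) : ℕ) = i := rfl

@[simp] lemma finSumFinEquivOfLE_inr_val {k N : ℕ} (hk : k ≤ N) (i : Fin (N - k)) :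
    (finSumFinEquivOfLE hk (Sum.inr i) : ℕ) = k + i := rfl

section Blocks

variable {k N : ℕ} (hk : k ≤ N)

local notation "e" => finSumFinEquivOfLE hk

lemma submatrix_dilate (A : MatPoly d k) :
    (dilate A N).submatrix e e = fromBlocks A 0 0 1 := by
  apply Matrix.ext
  rintro (i | i) (j | j) <;> simp [dilate, one_apply, Fin.ext_iff]
  exact if_neg (by omega)

lemma submatrix_dilate_mul_dilate_sub_one (A B : MatPoly d k) :
    (dilate A N * dilate B N - 1).submatrix e e = fromBlocks (A * B - 1) 0 0 0 := by
  rw [submatrix_sub, Pi.sub_apply, Pi.sub_apply, ← submatrix_mul_equiv _ _ _ e,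
    submatrix_dilate, submatrix_dilate, submatrix_one_equiv, fromBlocks_multiply]
  apply Matrix.ext
  rintro (i | i) (j | j) <;> simp [one_apply]

lemma toBlocks₁₁_submatrix_mul_dilate_sub_one (S : MatPoly d N) (A : MatPoly d k) :
    ((S * dilate A N - 1).submatrix e e).toBlocks₁₁ = (S.submatrix e e).toBlocks₁₁ * A - 1 := by
  rw [submatrix_sub, Pi.sub_apply, Pi.sub_apply, ← submatrix_mul_equiv S _ _ e,
    submatrix_dilate, submatrix_one_equiv, ← fromBlocks_toBlocks (S.submatrix e e),
    fromBlocks_multiply]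
  apply Matrix.ext
  intro i j
  simp [toBlocks₁₁, one_apply]

lemma MatPoly.normSq_eq_sum_submatrix (S : MatPoly d N) :
    S.normSq = ∑ a, ∑ b, ((S.submatrix e e) a b).normSq := by
  rw [MatPoly.normSq, ← Equiv.sum_comp e]
  exact sum_congr rfl fun a _ => (Equiv.sum_comp e _).symm

lemma MatPoly.normSq_eq_of_submatrix_eq_fromBlocks {S : MatPoly d N} {E : MatPoly d k}
    (hS : S.submatrix e e = fromBlocks E 0 0 0) : S.normSq = E.normSq := by
  rw [MatPoly.normSq_eq_sum_submatrix hk, hS]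
  simp [Fintype.sum_sum_type, MatPoly.normSq, FreePoly.normSq]

lemma MatPoly.normSq_toBlocks₁₁_submatrix_le (S : MatPoly d N) :
    MatPoly.normSq (S.submatrix e e).toBlocks₁₁ ≤ S.normSq := by
  rw [MatPoly.normSq_eq_sum_submatrix hk, Fintype.sum_sum_type]
  refine le_add_of_le_of_nonneg (sum_le_sum fun i _ => ?_)
    (sum_nonneg fun _ _ => sum_nonneg fun _ _ => FreePoly.normSq_nonneg _)
  rw [Fintype.sum_sum_type]
  exact le_add_of_nonneg_right (sum_nonneg fun _ _ => FreePoly.normSq_nonneg _)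

lemma MatPoly.degLE_toBlocks₁₁_submatrix {S : MatPoly d N} {n : ℕ} (hS : S.degLE n) :
    MatPoly.degLE (S.submatrix e e).toBlocks₁₁ n :=
  fun _ _ => hS _ _

end Blocks

variable {k l : ℕ}

lemma StablyAssociated.symm {F : MatPoly d k} {G : MatPoly d l} (h : StablyAssociated F G) :
    StablyAssociated G F := by
  obtain ⟨N, hk, hl, _, _, ⟨p, rfl⟩, ⟨q, rfl⟩, hFG⟩ := h
  refine ⟨N, hl, hk, ↑p⁻¹, ↑q⁻¹, p⁻¹.isUnit, q⁻¹.isUnit, ?_⟩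
  simp [← hFG, mul_assoc]

theorem StablyAssociated.exists_transfer_approximant {F : MatPoly d k} {G : MatPoly d l}
    (h : StablyAssociated F G) :
    ∃ C > 0, ∃ D : ℕ, ∀ n (R : MatPoly d k), R.degLE n → ∃ R' : MatPoly d l,
      R'.degLE (n + D) ∧ MatPoly.normSq (R' * G - 1) ≤ C * MatPoly.normSq (R * F - 1) := by
  obtain ⟨N, hk, hl, _, _, ⟨p, rfl⟩, ⟨q, rfl⟩, hFG⟩ := h
  obtain ⟨C, hC, hconj⟩ := MatPoly.exists_normSq_mul_mul_le (↑q⁻¹ : MatPoly d N) q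
  obtain ⟨a, ha⟩ := (↑q⁻¹ : MatPoly d N).exists_degLE
  obtain ⟨b, hb⟩ := (↑p⁻¹ : MatPoly d N).exists_degLE
  refine ⟨C, hC, a + b, fun n R hR => ?_⟩
  set S : MatPoly d N := ↑q⁻¹ * dilate R N * ↑p⁻¹
  have hS : S * dilate G N - 1 = ↑q⁻¹ * (dilate R N * dilate F N - 1) * ↑q := by
    rw [← hFG]
    simp only [S, mul_assoc, Units.inv_mul_cancel_left]
    rw [sub_mul, mul_sub, one_mul, Units.inv_mul, mul_assoc]
  let e := finSumFinEquivOfLE hl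
  refine ⟨(S.submatrix e e).toBlocks₁₁, ?_, ?_⟩
  · have hSdeg : S.degLE (a + n + b) :=
      MatPoly.degLE_mul (MatPoly.degLE_mul ha (MatPoly.degLE_dilate hR N)) hb
    exact MatPoly.degLE_toBlocks₁₁_submatrix hl (MatPoly.degLE_mono hSdeg (by omega))
  calc MatPoly.normSq ((S.submatrix e e).toBlocks₁₁ * G - 1)
      = MatPoly.normSq ((S * dilate G N - 1).submatrix e e).toBlocks₁₁ := by
        rw [toBlocks₁₁_submatrix_mul_dilate_sub_one]
    _ ≤ MatPoly.normSq (S * dilate G N - 1) := MatPoly.normSq_toBlocks₁₁_submatrix_le hl _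
    _ ≤ C * MatPoly.normSq (dilate R N * dilate F N - 1) := by rw [hS]; exact hconj _
    _ = C * MatPoly.normSq (R * F - 1) := by
        rw [MatPoly.normSq_eq_of_submatrix_eq_fromBlocks hk
          (submatrix_dilate_mul_dilate_sub_one hk R F)]

def IsOptimalApproximants (F : MatPoly d k) (P : ℕ → MatPoly d k) : Prop :=
  ∀ n, (P n).degLE n ∧ ∀ R : MatPoly d k, R.degLE n →
    MatPoly.normSq (P n * F - 1) ≤ MatPoly.normSq (R * F - 1)

lemma StablyAssociated.exists_normSq_optimal_le {F : MatPoly d k} {G : MatPoly d l}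
    (h : StablyAssociated F G) {Q : ℕ → MatPoly d l} (hQ : IsOptimalApproximants G Q) :
    ∃ C > 0, ∃ D : ℕ, ∀ n (R : MatPoly d k), R.degLE n →
      MatPoly.normSq (Q (n + D) * G - 1) ≤ C * MatPoly.normSq (R * F - 1) := by
  obtain ⟨C, hC, D, htransfer⟩ := h.exists_transfer_approximant
  refine ⟨C, hC, D, fun n R hR => ?_⟩
  obtain ⟨R', hR', hle⟩ := htransfer n R hR
  exact ((hQ (n + D)).2 R' hR').trans hle

end

/-- If `F` and `G` are stably associated, their optimal polynomial approximants achieve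
comparable rates of decay. -/
theorem stablyAssociated_same_rate {d k l : ℕ} (F : MatPoly d k) (G : MatPoly d l)
    (h : StablyAssociated F G)
    (P : ℕ → MatPoly d k) (Q : ℕ → MatPoly d l)
    (hP : ∀ n, (P n).degLE n ∧ ∀ R : MatPoly d k, R.degLE n →
        MatPoly.normSq (P n * F - 1) ≤ MatPoly.normSq (R * F - 1))
    (hQ : ∀ n, (Q n).degLE n ∧ ∀ R : MatPoly d l, R.degLE n →
        MatPoly.normSq (Q n * G - 1) ≤ MatPoly.normSq (R * G - 1)) :
    ∃ (C₁ C₂ : ℝ) (D₁ D₂ N₀ : ℕ), ∀ n : ℕ, N₀ ≤ n →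
      C₁ * MatPoly.normSq (P (n + D₁) * F - 1) ≤ MatPoly.normSq (Q n * G - 1) ∧
      MatPoly.normSq (Q n * G - 1) ≤ C₂ * MatPoly.normSq (P (n - D₂) * F - 1) := by
  obtain ⟨C₁, hC₁, D₁, hPQ⟩ := h.symm.exists_normSq_optimal_le hP
  obtain ⟨C₂, -, D₂, hQP⟩ := h.exists_normSq_optimal_le hQ
  refine ⟨C₁⁻¹, C₂, D₁, D₂, D₂, fun n hn => ⟨?_, ?_⟩⟩
  · rw [inv_mul_le_iff₀ hC₁]
    exact hPQ n (Q n) (hQ n).1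
  · simpa [Nat.sub_add_cancel hn] using hQP (n - D₂) (P (n - D₂)) (hP _).1
end
end

section
/- Let M = (M₁,…,M_d) be a d-tuple of m×m complex matrices with ‖Σ_{j=1}^d M_j*M_j‖ ≤ 1 (a column contraction), let Mx denote the linear pencil M₁x₁ + ⋯ + M_dx_d, and let π_n(z) = Σ_{k=0}^n (1 − (k+1)/(n+2)) z^k. Then the multiplier norm of the matrix free polynomial π_n(Mx) (as a left multiplication operator on m×m-matrix-valued free polynomials with the ℓ² coefficient norm) is at most (n+1)/2. -/
open scoped BigOperators Kronecker
open Matrix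

noncomputable section

/-! The ℓ² norm of `F = Σ_w B_w x^w` is the ℓ² norm of its coefficient sequence `(B_w)_w`, each
`B_w` measured in the Frobenius norm. Left multiplication by the pencil `Mx` sends this sequence
to `(M_a B_w)` placed at the pairwise distinct words `x_a w`, so
`‖Mx · F‖₂² = Σ_w Σ_a ‖M_a B_w‖² ≤ ‖Σ_a M_a* M_a‖ · ‖F‖₂²`; the inequality holds column by
column because `Σ_a ‖M_a v‖² = ⟪(Σ_a M_a* M_a) v, v⟫`. Hence `Mx` and all its powers act as
contractions, and the triangle inequality bounds the multiplier norm of `π_n(Mx)` by the sum of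
its coefficients, `Σ_{k ≤ n} (1 - (k+1)/(n+2)) = (n+1)/2`. -/

open ContinuousLinearMap InnerProduct in
theorem ContinuousLinearMap.sum_norm_sq_apply_le {𝕜 E F ι : Type*} [RCLike 𝕜]
    [NormedAddCommGroup E] [InnerProductSpace 𝕜 E] [CompleteSpace E]
    [NormedAddCommGroup F] [InnerProductSpace 𝕜 F] [CompleteSpace F]
    (s : Finset ι) (T : ι → E →L[𝕜] F) (x : E) :
    ∑ a ∈ s, ‖T a x‖ ^ 2 ≤ ‖∑ a ∈ s, (T a)† ∘L T a‖ * ‖x‖ ^ 2 := by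
  calc ∑ a ∈ s, ‖T a x‖ ^ 2 = RCLike.re (inner 𝕜 ((∑ a ∈ s, (T a)† ∘L T a) x) x) := by
        simp [apply_norm_sq_eq_inner_adjoint_left, sum_inner]
    _ ≤ ‖(∑ a ∈ s, (T a)† ∘L T a) x‖ * ‖x‖ := re_inner_le_norm _ _
    _ ≤ ‖∑ a ∈ s, (T a)† ∘L T a‖ * ‖x‖ * ‖x‖ := by gcongr; exact le_opNorm _ _
    _ = ‖∑ a ∈ s, (T a)† ∘L T a‖ * ‖x‖ ^ 2 := by ring

namespace Matrix

theorem sum_norm_sq_mulVec_le {ι n : Type} [Fintype n] [DecidableEq n] (s : Finset ι)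
    (M : ι → Matrix n n ℂ) (v : n → ℂ) :
    ∑ a ∈ s, ‖WithLp.toLp 2 (M a *ᵥ v)‖ ^ 2 ≤
      opNorm (∑ a ∈ s, (M a)ᴴ * M a) * ‖WithLp.toLp 2 v‖ ^ 2 := by
  have h := ContinuousLinearMap.sum_norm_sq_apply_le s (fun a => toEuclideanCLM (𝕜 := ℂ) (M a))
    (WithLp.toLp 2 v)
  simp only [toEuclideanCLM_toLp] at h
  convert h using 3
  rw [opNorm, map_sum]
  congr! 2 with a
  rw [map_mul, ← star_eq_conjTranspose, map_star, ContinuousLinearMap.star_eq_adjoint]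
  rfl

attribute [local instance] frobeniusNormedAddCommGroup

theorem frobenius_norm_sq_eq_sum_rows {m n : Type*} [Fintype m] [Fintype n] (A : Matrix m n ℂ) :
    ‖A‖ ^ 2 = ∑ i, ‖WithLp.toLp 2 (A i)‖ ^ 2 := by
  change ‖WithLp.toLp 2 fun i => WithLp.toLp 2 (A i)‖ ^ 2 = _
  rw [PiLp.norm_sq_eq_of_L2]

theorem frobenius_norm_sq_eq_sum {m n : Type*} [Fintype m] [Fintype n] (A : Matrix m n ℂ) :
    ‖A‖ ^ 2 = ∑ i, ∑ j, ‖A i j‖ ^ 2 := by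
  simp only [frobenius_norm_sq_eq_sum_rows, PiLp.norm_sq_eq_of_L2]

theorem sum_frobenius_norm_sq_mul_le {ι n κ : Type} [Fintype n] [DecidableEq n] [Fintype κ]
    (s : Finset ι) (M : ι → Matrix n n ℂ) (B : Matrix n κ ℂ) :
    ∑ a ∈ s, ‖M a * B‖ ^ 2 ≤ opNorm (∑ a ∈ s, (M a)ᴴ * M a) * ‖B‖ ^ 2 := by
  have hcols : ∀ A : Matrix n κ ℂ, ‖A‖ ^ 2 = ∑ j, ‖WithLp.toLp 2 (Aᵀ j)‖ ^ 2 := fun A => by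
    rw [← frobenius_norm_transpose, frobenius_norm_sq_eq_sum_rows]
  have hmul : ∀ a, (M a * B)ᵀ = fun j => M a *ᵥ Bᵀ j := fun a => by
    ext j i; simp [mul_apply, mulVec, dotProduct]
  simp only [hcols, hmul, Finset.mul_sum]
  rw [Finset.sum_comm]
  exact Finset.sum_le_sum fun j _ => sum_norm_sq_mulVec_le s M (Bᵀ j)

end Matrix

instance {α : Type*} [DecidableEq α] : DecidableEq (FreeMonoid α) :=
  inferInstanceAs (DecidableEq (List α))

theorem MonoidAlgebra.coeff_single_of_mul_of_mul {R α : Type*} [Semiring R] [DecidableEq α]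
    (a b : α) (r : R) (f : MonoidAlgebra R (FreeMonoid α)) (w : FreeMonoid α) :
    (single (FreeMonoid.of b) r * f).coeff (FreeMonoid.of a * w) =
      if b = a then r * f.coeff w else 0 := by
  split_ifs with hba
  · subst hba; exact coeff_single_mul_mul f r _ w
  · refine coeff_single_mul_of_forall_mul_ne r f fun u h => hba ?_
    simpa using congrArg List.head? (congrArg FreeMonoid.toList h)

namespace MatPoly

-- Matrices carry the Frobenius norm, so `‖F.coeffMat w‖² = tr (B_w* B_w)`.
attribute [local instance] Matrix.frobeniusNormedAddCommGroup Matrix.frobeniusNormedSpace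

variable {d k : ℕ}

def coeffMat (F : MatPoly d k) (w : Word d) : Matrix (Fin k) (Fin k) ℂ :=
  Matrix.of fun i j => (F i j).coeff w

def support (F : MatPoly d k) : Finset (Word d) :=
  Finset.univ.biUnion fun p : Fin k × Fin k => (F p.1 p.2).coeff.support

theorem coeffMat_add (F G : MatPoly d k) (w : Word d) :
    (F + G).coeffMat w = F.coeffMat w + G.coeffMat w := by
  ext i j; simp [coeffMat]

theorem coeffMat_smul (c : ℂ) (F : MatPoly d k) (w : Word d) :
    (c • F).coeffMat w = c • F.coeffMat w := by
  ext i j; simp [coeffMat]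

theorem coeff_support_subset (F : MatPoly d k) (i j : Fin k) :
    (F i j).coeff.support ⊆ F.support :=
  fun _ hw => Finset.mem_biUnion.mpr ⟨(i, j), Finset.mem_univ _, hw⟩

theorem normSq_eq_sum_coeffMat {F : MatPoly d k} {W : Finset (Word d)} (hW : F.support ⊆ W) :
    F.normSq = ∑ w ∈ W, ‖F.coeffMat w‖ ^ 2 := by
  have hentry : ∀ i j, (F i j).normSq = ∑ w ∈ W, ‖(F i j).coeff w‖ ^ 2 := fun i j =>
    Finset.sum_subset ((F.coeff_support_subset i j).trans hW) fun w _ hw => by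
      simp [Finsupp.notMem_support_iff.mp hw]
  simp only [MatPoly.normSq, hentry, Matrix.frobenius_norm_sq_eq_sum, coeffMat, Matrix.of_apply]
  exact (Finset.sum_congr rfl fun _ _ => Finset.sum_comm).trans Finset.sum_comm

theorem norm2_eq_norm_toLp {F : MatPoly d k} {W : Finset (Word d)} (hW : F.support ⊆ W) :
    F.norm2 = ‖WithLp.toLp 2 fun w : W => F.coeffMat w‖ := by
  rw [MatPoly.norm2, normSq_eq_sum_coeffMat hW, PiLp.norm_eq_of_L2, ← Finset.sum_coe_sort W]

theorem norm2_zero : (0 : MatPoly d k).norm2 = 0 := by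
  simp [MatPoly.norm2, MatPoly.normSq, FreePoly.normSq]

theorem norm2_add_le (F G : MatPoly d k) : (F + G).norm2 ≤ F.norm2 + G.norm2 := by
  have hsupp : (F + G).support ⊆ F.support ∪ G.support := fun w hw => by
    obtain ⟨p, -, hp⟩ := Finset.mem_biUnion.mp hw
    obtain hF | hG := Finset.mem_union.mp (Finsupp.support_add hp)
    · exact Finset.mem_union_left _ (F.coeff_support_subset _ _ hF)
    · exact Finset.mem_union_right _ (G.coeff_support_subset _ _ hG)
  rw [norm2_eq_norm_toLp hsupp, norm2_eq_norm_toLp (W := F.support ∪ G.support)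
    Finset.subset_union_left, norm2_eq_norm_toLp (W := F.support ∪ G.support)
    Finset.subset_union_right]
  simp only [coeffMat_add]
  exact norm_add_le (WithLp.toLp 2 fun w : ↥(F.support ∪ G.support) => F.coeffMat w)
    (WithLp.toLp 2 fun w : ↥(F.support ∪ G.support) => G.coeffMat w)

theorem norm2_smul (c : ℂ) (F : MatPoly d k) : (c • F).norm2 = ‖c‖ * F.norm2 := by
  have hsupp : (c • F).support ⊆ F.support := fun w hw => by
    obtain ⟨p, -, hp⟩ := Finset.mem_biUnion.mp hw
    exact F.coeff_support_subset _ _ (Finsupp.support_smul hp)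
  rw [norm2_eq_norm_toLp hsupp, norm2_eq_norm_toLp subset_rfl]
  simp only [coeffMat_smul]
  exact norm_smul c (WithLp.toLp 2 fun w : F.support => F.coeffMat w)

theorem coeffMat_pencil_mul (M : Fin d → Matrix (Fin k) (Fin k) ℂ) (F : MatPoly d k)
    (a : Fin d) (w : Word d) :
    coeffMat (pencil M * F) (FreeMonoid.of a * w) = M a * F.coeffMat w := by
  ext i j
  simp [coeffMat, pencil, Matrix.mul_apply, Finset.sum_mul, MonoidAlgebra.coeff_sum,
    MonoidAlgebra.coeff_single_of_mul_of_mul]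

theorem support_pencil_mul_subset (M : Fin d → Matrix (Fin k) (Fin k) ℂ) (F : MatPoly d k) :
    support (pencil M * F) ⊆
      (Finset.univ ×ˢ F.support).image fun q : Fin d × Word d => FreeMonoid.of q.1 * q.2 := by
  intro u hu
  obtain ⟨⟨i, j⟩, -, hij⟩ := Finset.mem_biUnion.mp hu
  have hentry : (pencil M * F) i j =
      ∑ l, ∑ b, MonoidAlgebra.single (FreeMonoid.of b) (M b i l) * F l j := by
    simp [pencil, Matrix.mul_apply, Finset.sum_mul]
  rw [hentry, MonoidAlgebra.coeff_sum] at hij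
  obtain ⟨l, -, hl⟩ := Finset.mem_biUnion.mp (Finsupp.support_finsetSum hij)
  rw [MonoidAlgebra.coeff_sum] at hl
  obtain ⟨b, -, hb⟩ := Finset.mem_biUnion.mp (Finsupp.support_finsetSum hl)
  obtain ⟨w, hw, rfl⟩ :=
    Finset.mem_image.mp (MonoidAlgebra.support_coeff_single_mul_subset _ _ _ hb)
  exact Finset.mem_image.mpr
    ⟨(b, w), Finset.mem_product.mpr ⟨Finset.mem_univ b, F.coeff_support_subset l j hw⟩, rfl⟩

theorem normSq_pencil_mul_le (M : Fin d → Matrix (Fin k) (Fin k) ℂ) (F : MatPoly d k) :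
    normSq (pencil M * F) ≤ opNorm (∑ a, (M a)ᴴ * M a) * F.normSq := by
  have hinj : Function.Injective fun q : Fin d × Word d => FreeMonoid.of q.1 * q.2 := by
    rintro ⟨a, w⟩ ⟨b, u⟩ h
    simpa using congrArg FreeMonoid.toList h
  rw [normSq_eq_sum_coeffMat (support_pencil_mul_subset M F),
    Finset.sum_image fun _ _ _ _ h => hinj h, Finset.sum_product,
    normSq_eq_sum_coeffMat subset_rfl, Finset.mul_sum]
  simp only [coeffMat_pencil_mul]
  rw [Finset.sum_comm]
  exact Finset.sum_le_sum fun w _ => Matrix.sum_frobenius_norm_sq_mul_le _ M (F.coeffMat w)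

theorem norm2_pencil_mul_le (M : Fin d → Matrix (Fin k) (Fin k) ℂ) (F : MatPoly d k) :
    norm2 (pencil M * F) ≤ colNorm M * F.norm2 := by
  rw [norm2, norm2, colNorm, ← Real.sqrt_mul (x := opNorm _) (norm_nonneg _)]
  exact Real.sqrt_le_sqrt (normSq_pencil_mul_le M F)

theorem norm2_pencil_pow_mul_le (M : Fin d → Matrix (Fin k) (Fin k) ℂ) (n : ℕ)
    (F : MatPoly d k) : norm2 (pencil M ^ n * F) ≤ colNorm M ^ n * F.norm2 := by
  induction n with
  | zero => simp
  | succ n ih =>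
    rw [pow_succ', mul_assoc, pow_succ', mul_assoc]
    exact (norm2_pencil_mul_le M _).trans (mul_le_mul_of_nonneg_left ih (Real.sqrt_nonneg _))

theorem norm2_sum_smul_pencil_pow_mul_le (M : Fin d → Matrix (Fin k) (Fin k) ℂ)
    (s : Finset ℕ) (c : ℕ → ℂ) (F : MatPoly d k) :
    norm2 ((∑ n ∈ s, c n • pencil M ^ n) * F) ≤ (∑ n ∈ s, ‖c n‖ * colNorm M ^ n) * F.norm2 := by
  rw [Finset.sum_mul, Finset.sum_mul]
  refine (Finset.le_sum_of_subadditive norm2 norm2_zero.le norm2_add_le _ _).trans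
    (Finset.sum_le_sum fun n _ => ?_)
  rw [Matrix.smul_mul, norm2_smul, mul_assoc]
  exact mul_le_mul_of_nonneg_left (norm2_pencil_pow_mul_le M n F) (norm_nonneg _)

end MatPoly

def fejerCoeff (n k : ℕ) : ℝ := 1 - (k + 1) / (n + 2)

theorem fejerCoeff_nonneg {n k : ℕ} (hk : k ≤ n) : 0 ≤ fejerCoeff n k := by
  rw [fejerCoeff, sub_nonneg, div_le_one (by positivity)]
  exact_mod_cast (by omega : k + 1 ≤ n + 2)

theorem sum_fejerCoeff (n : ℕ) :
    ∑ k ∈ Finset.range (n + 1), fejerCoeff n k = (n + 1) / 2 := by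
  have hgauss : ∀ p : ℕ, ∑ k ∈ Finset.range p, ((k : ℝ) + 1) = p * (p + 1) / 2 := by
    intro p
    induction p with
    | zero => simp
    | succ p ih => rw [Finset.sum_range_succ, ih]; push_cast; ring
  simp only [fejerCoeff]
  rw [Finset.sum_sub_distrib, Finset.sum_const, Finset.card_range, ← Finset.sum_div,
    hgauss (n + 1)]
  push_cast
  field_simp
  ring

theorem piMx_eq_sum_fejerCoeff {d m : ℕ} (n : ℕ) (M : Fin d → Matrix (Fin m) (Fin m) ℂ) :
    piMx n M = ∑ k ∈ Finset.range (n + 1), (fejerCoeff n k : ℂ) • pencil M ^ k := by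
  simp [piMx, fejerCoeff]

/-- If `M` is a column contraction, the multiplier norm of `π_n(Mx)` is at most
`(n+1)/2`. -/
theorem piMx_mult_norm {d m : ℕ} (n : ℕ) (M : Fin d → Matrix (Fin m) (Fin m) ℂ)
    (hM : opNorm (∑ j, (M j)ᴴ * M j) ≤ 1) :
    ∀ F : MatPoly d m,
      MatPoly.norm2 (piMx n M * F) ≤ (((n : ℝ) + 1) / 2) * MatPoly.norm2 F := by
  intro F
  have hcol : colNorm M ≤ 1 := Real.sqrt_le_one.mpr hM
  calc MatPoly.norm2 (piMx n M * F)
      ≤ (∑ k ∈ Finset.range (n + 1), ‖(fejerCoeff n k : ℂ)‖ * colNorm M ^ k) * F.norm2 := by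
        rw [piMx_eq_sum_fejerCoeff]
        exact MatPoly.norm2_sum_smul_pencil_pow_mul_le M _ _ F
    _ ≤ (∑ k ∈ Finset.range (n + 1), fejerCoeff n k) * F.norm2 := by
        gcongr with k hk
        · exact Real.sqrt_nonneg _
        have hkn : 0 ≤ fejerCoeff n k := fejerCoeff_nonneg (Finset.mem_range_succ_iff.mp hk)
        rw [Complex.norm_real, Real.norm_of_nonneg hkn]
        exact mul_le_of_le_one_right hkn (pow_le_one₀ (Real.sqrt_nonneg _) hcol)
    _ = ((n + 1) / 2) * F.norm2 := by rw [sum_fejerCoeff]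
end
end
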